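/- arXiv:2209.08845 — 8 statements merged into one kernel-verified Lean document; each statement's English description precedes it below -/
import Mathlib

section
/- Let H be a ψ-expander graph and G a graph on the same vertex set V. If there exists an embedding Π of H into G (mapping each edge (u,v) of H to a u-v path in G) with congestion at most C, then for every nonempty S ⊊ V with |S| ≤ |V \ S|, the number of edges of G crossing (S, V\S) is at least ψ·|S|/C; i.e., G is a (ψ/C)-expander. -/
open Finset
open scoped Classical

/-- Number of edges of `G` with exactly one endpoint in `S` (counted via the
ordered pair whose first coordinate lies in `S`). -/
noncomputable def cutCard {V : Type*} [Fintype V] (G : SimpleGraph V) (S : Finset V) : ℕ :=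
  (Finset.univ.filter (fun p : V × V => p.1 ∈ S ∧ p.2 ∉ S ∧ G.Adj p.1 p.2)).card

lemma cross_edge_of_walk {V : Type*} {G : SimpleGraph V} (S : Finset V) :
    ∀ {a b : V} (W : G.Walk a b), ¬(a ∈ S ↔ b ∈ S) →
      ∃ x y, x ∈ S ∧ y ∉ S ∧ G.Adj x y ∧ s(x, y) ∈ W.edges := by
  intro a b W
  induction W with
  | nil => intro h; exact absurd Iff.rfl h
  | @cons a c b h W ih =>
    intro hab
    by_cases ha : a ∈ S <;> by_cases hc : c ∈ S
    · have hb : b ∉ S := fun hb => hab ⟨fun _ => hb, fun _ => ha⟩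
      obtain ⟨x, y, hx, hy, hxy, he⟩ := ih (fun hiff => hb (hiff.mp hc))
      exact ⟨x, y, hx, hy, hxy, by simp [he]⟩
    · exact ⟨a, c, ha, hc, h, by simp⟩
    · exact ⟨c, a, hc, ha, h.symm, by simp [Sym2.eq_swap]⟩
    · have hb : b ∈ S := by
        by_contra hb; exact hab ⟨fun h' => absurd h' ha, fun h' => absurd h' hb⟩
      obtain ⟨x, y, hx, hy, hxy, he⟩ := ih (fun hiff => hc (hiff.mpr hb))
      exact ⟨x, y, hx, hy, hxy, by simp [he]⟩

/-- If a `ψ`-expander `H` embeds into `G` (each edge of `H` is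
mapped to a path in `G` between its endpoints) with congestion at most `C`, then
for every nonempty proper `S` with `|S| ≤ |V \ S|` we have
`|E_G(S, V\S)| ≥ ψ·|S|/C`; i.e. `G` is a `(ψ/C)`-expander. -/
theorem stmt0 {V : Type*} [Fintype V] [LinearOrder V] (G H : SimpleGraph V)
    (ψ C : ℝ) (hψ : 0 < ψ) (hC : 0 < C)
    (hexp : ∀ S : Finset V, S.Nonempty → S ≠ Finset.univ →
      ψ * min (S.card : ℝ) ((Finset.univ \ S).card : ℝ) ≤ (cutCard H S : ℝ))
    (P : ∀ u v : V, H.Adj u v → G.Walk u v)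
    (hpath : ∀ (u v : V) (h : H.Adj u v), (P u v h).IsPath)
    (hcong : ∀ e ∈ G.edgeSet,
      ((Finset.univ.filter (fun p : V × V => p.1 < p.2 ∧
          ∃ h : H.Adj p.1 p.2, e ∈ (P p.1 p.2 h).edges)).card : ℝ) ≤ C) :
    ∀ S : Finset V, S.Nonempty → S ≠ Finset.univ →
      (S.card : ℝ) ≤ ((Finset.univ \ S).card : ℝ) →
      ψ * (S.card : ℝ) / C ≤ (cutCard G S : ℝ) := by
  intro S hS1 hS2 hS3
  set A : Finset (V × V) :=
    Finset.univ.filter (fun p : V × V => p.1 ∈ S ∧ p.2 ∉ S ∧ H.Adj p.1 p.2) with hAdef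
  set B : Finset (V × V) :=
    Finset.univ.filter (fun p : V × V => p.1 ∈ S ∧ p.2 ∉ S ∧ G.Adj p.1 p.2) with hBdef
  set t : Finset (Sym2 V) := B.image (fun p => s(p.1, p.2)) with htdef
  set o : V × V → V × V := fun p => if p.1 < p.2 then p else (p.2, p.1) with hodef
  -- choice of a crossing G-edge on the path of each crossing H-edge
  have key : ∀ p : V × V, ∃ e : Sym2 V, p ∈ A →
      (∃ x y, x ∈ S ∧ y ∉ S ∧ G.Adj x y ∧ e = s(x, y)) ∧
      ((o p).1 < (o p).2 ∧ ∃ h : H.Adj (o p).1 (o p).2, e ∈ (P (o p).1 (o p).2 h).edges) := by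
    intro p
    by_cases hp : p ∈ A
    · obtain ⟨hu, hv, hadj⟩ := (Finset.mem_filter.mp hp).2
      have hne : p.1 ≠ p.2 := hadj.ne
      rcases lt_or_gt_of_ne hne with hlt | hgt
      · obtain ⟨x, y, hx, hy, hxy, he⟩ :=
          cross_edge_of_walk S (P p.1 p.2 hadj) (fun hiff => hv (hiff.mp hu))
        refine ⟨s(x, y), fun _ => ⟨⟨x, y, hx, hy, hxy, rfl⟩, ?_⟩⟩
        have ho : o p = p := if_pos hlt
        rw [ho]
        exact ⟨hlt, hadj, he⟩
      · obtain ⟨x, y, hx, hy, hxy, he⟩ :=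
          cross_edge_of_walk S (P p.2 p.1 hadj.symm) (fun hiff => hv (hiff.mpr hu))
        refine ⟨s(x, y), fun _ => ⟨⟨x, y, hx, hy, hxy, rfl⟩, ?_⟩⟩
        have ho : o p = (p.2, p.1) := if_neg (not_lt.mpr hgt.le)
        rw [ho]
        exact ⟨hgt, hadj.symm, he⟩
    · exact ⟨s(p.1, p.1), fun h => absurd h hp⟩
  choose f hf using key
  have hmap : ∀ p ∈ A, f p ∈ t := by
    intro p hp
    obtain ⟨x, y, hx, hy, hxy, he⟩ := (hf p hp).1
    exact Finset.mem_image.mpr ⟨(x, y), Finset.mem_filter.mpr ⟨Finset.mem_univ _, hx, hy, hxy⟩,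
      he.symm⟩
  have hAcard : A.card = ∑ e ∈ t, (A.filter fun p => f p = e).card :=
    Finset.card_eq_sum_card_fiberwise hmap
  -- fiber bound
  have hfiber : ∀ e ∈ t, ((A.filter fun p => f p = e).card : ℝ) ≤ C := by
    intro e het
    obtain ⟨q, hq, hqe⟩ := Finset.mem_image.mp het
    obtain ⟨_, _, _, hqadj⟩ := Finset.mem_filter.mp hq
    have heG : e ∈ G.edgeSet := by rw [← hqe]; exact hqadj
    refine le_trans ?_ (hcong e heG)
    have hle : (A.filter fun p => f p = e).card ≤
        (Finset.univ.filter (fun p : V × V => p.1 < p.2 ∧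
          ∃ h : H.Adj p.1 p.2, e ∈ (P p.1 p.2 h).edges)).card := by
      apply Finset.card_le_card_of_injOn o
      · intro p hp
        obtain ⟨hpA, hpe⟩ := Finset.mem_filter.mp hp
        obtain ⟨hlt, h, hmem⟩ := (hf p hpA).2
        exact Finset.mem_filter.mpr ⟨Finset.mem_univ _, hlt, h, hpe ▸ hmem⟩
      · intro p hp p' hp' hpp'
        have hpA := (Finset.mem_filter.mp (Finset.mem_coe.mp hp)).1
        have hp'A := (Finset.mem_filter.mp (Finset.mem_coe.mp hp')).1
        obtain ⟨hu, hv, -⟩ := (Finset.mem_filter.mp hpA).2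
        obtain ⟨hu', hv', -⟩ := (Finset.mem_filter.mp hp'A).2
        have : p = p' ∨ p = (p'.2, p'.1) := by
          simp only [hodef] at hpp'
          split_ifs at hpp' with h1 h2 h2
          · exact Or.inl hpp'
          · exact Or.inr hpp'
          · refine Or.inr (Prod.ext ?_ ?_) <;> simp [← hpp']
          · have e1 := congrArg Prod.fst hpp'
            have e2 := congrArg Prod.snd hpp'
            simp only at e1 e2
            exact Or.inl (Prod.ext e2 e1)
        rcases this with h | h
        · exact h
        · exfalso
          have : p.1 = p'.2 := by rw [h]
          exact hv' (this ▸ hu)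
    exact Nat.cast_le.mpr hle
  -- sum bound
  have hsum : ((A.card : ℝ)) ≤ C * t.card := by
    rw [hAcard]
    push_cast
    calc (∑ e ∈ t, ((A.filter fun p => f p = e).card : ℝ))
        ≤ ∑ _e ∈ t, C := Finset.sum_le_sum hfiber
      _ = t.card * C := by rw [Finset.sum_const, nsmul_eq_mul]
      _ = C * t.card := mul_comm _ _
  have hBc : cutCard G S = B.card := by
    unfold cutCard; rw [hBdef]; congr 1; exact Finset.filter_congr_decidable _ _ _
  have ht : (t.card : ℝ) ≤ (cutCard G S : ℝ) := by
    rw [hBc]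
    exact_mod_cast Finset.card_image_le (s := B) (f := fun p => s(p.1, p.2))
  have hH : ψ * (S.card : ℝ) ≤ (cutCard H S : ℝ) := by
    have := hexp S hS1 hS2
    rwa [min_eq_left hS3] at this
  have hHA : (cutCard H S : ℝ) = (A.card : ℝ) := by
    have : cutCard H S = A.card := by
      unfold cutCard; rw [hAdef]; congr 1; exact Finset.filter_congr_decidable _ _ _
    exact_mod_cast this
  rw [div_le_iff₀ hC]
  calc ψ * (S.card : ℝ) ≤ (cutCard H S : ℝ) := hH
    _ = (A.card : ℝ) := hHA
    _ ≤ C * t.card := hsum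
    _ ≤ C * (cutCard G S : ℝ) := mul_le_mul_of_nonneg_left ht hC.le
    _ = (cutCard G S : ℝ) * C := mul_comm _ _
end

section
/- Let H be a ψ-expander on n vertices, H' ⊆ H a subgraph with |E(H) \ E(H')| ≤ (ψ/2)·b·n for some b ∈ [0,1], and suppose there is an embedding of H' into G with congestion C. Then for every cut (S, S̄) with b·n ≤ |S| ≤ n/2, the sparsity Ψ_G(S) = |E_G(S,S̄)|/|S| is at least ψ/(2C). -/
open Finset
open scoped Classical

/-!
Route every edge of `H'` crossing the cut `(S, S̄)` along its embedding walk: the walk must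
cross the cut in some edge of `G`, and each edge of `G` carries at most `C` walks, so
`|E_{H'}(S, S̄)| ≤ C·|E_G(S, S̄)|`. The edges of `H` missing from `H'` lose at most
`(ψ/2)·b·n ≤ (ψ/2)·|S|` crossing edges, while expansion gives `|E_H(S, S̄)| ≥ ψ·|S|`
because `|S| ≤ |S̄|`. Hence `ψ·|S|/2 ≤ C·|E_G(S, S̄)|`.
-/

section Cut

variable {V : Type*}

noncomputable def cutDarts [Fintype V] (G : SimpleGraph V) (S : Finset V) : Finset (V × V) :=
  univ.filter (fun p : V × V => p.1 ∈ S ∧ p.2 ∉ S ∧ G.Adj p.1 p.2)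

theorem cutCard_eq_card_cutDarts [Fintype V] (G : SimpleGraph V) (S : Finset V) :
    cutCard G S = #(cutDarts G S) := rfl

theorem mem_cutDarts [Fintype V] {G : SimpleGraph V} {S : Finset V} {p : V × V} :
    p ∈ cutDarts G S ↔ p.1 ∈ S ∧ p.2 ∉ S ∧ G.Adj p.1 p.2 := by
  simp [cutDarts]

theorem Sym2.injOn_mk_uncurry_crossing (S : Finset V) :
    Set.InjOn Sym2.mk.uncurry {p : V × V | p.1 ∈ S ∧ p.2 ∉ S} := by
  rintro ⟨a, b⟩ ⟨ha, -⟩ ⟨c, d⟩ ⟨-, hd⟩ h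
  rcases Sym2.eq_iff.1 h with ⟨rfl, rfl⟩ | ⟨rfl, -⟩
  · rfl
  · exact absurd ha hd

theorem cutCard_le_cutCard_add_card_sdiff [Fintype V] [DecidableEq V] (G' G : SimpleGraph V)
    (S : Finset V) :
    cutCard G S ≤ cutCard G' S + #(G.edgeFinset \ G'.edgeFinset) := by
  rw [cutCard_eq_card_cutDarts,
    ← card_filter_add_card_filter_not (fun p : V × V => G'.Adj p.1 p.2)]
  gcongr ?_ + ?_
  · refine card_le_card fun p hp => ?_
    rw [mem_filter, mem_cutDarts] at hp
    exact mem_cutDarts.2 ⟨hp.1.1, hp.1.2.1, hp.2⟩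
  · refine card_le_card_of_injOn Sym2.mk.uncurry (fun p hp => ?_) fun p hp q hq =>
      Sym2.injOn_mk_uncurry_crossing S ?_ ?_
    · rw [mem_coe, mem_filter, mem_cutDarts] at hp
      simpa using ⟨hp.1.2.2, hp.2⟩
    · rw [mem_coe, mem_filter, mem_cutDarts] at hp
      exact ⟨hp.1.1, hp.1.2.1⟩
    · rw [mem_coe, mem_filter, mem_cutDarts] at hq
      exact ⟨hq.1.1, hq.1.2.1⟩

theorem SimpleGraph.Walk.exists_cutDart_mem_edges [Fintype V] {G : SimpleGraph V} {u v : V}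
    (w : G.Walk u v) {S : Finset V} (hu : u ∈ S) (hv : v ∉ S) :
    ∃ q ∈ cutDarts G S, s(q.1, q.2) ∈ w.edges := by
  obtain ⟨d, hd, hd1, hd2⟩ := w.exists_boundary_dart (S : Set V) hu hv
  exact ⟨d.toProd, mem_cutDarts.2 ⟨hd1, hd2, d.adj⟩, List.mem_map_of_mem hd⟩

theorem le_cutCard_of_two_mul_card_le [Fintype V] [DecidableEq V] {H : SimpleGraph V} {ψ : ℝ}
    (hexp : ∀ S : Finset V, S.Nonempty → S ≠ univ →
      ψ * min (#S : ℝ) (#(univ \ S) : ℝ) ≤ cutCard H S)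
    {S : Finset V} (hS : 2 * (#S : ℝ) ≤ Fintype.card V) :
    ψ * #S ≤ cutCard H S := by
  rcases S.eq_empty_or_nonempty with rfl | hne
  · simp
  have hne_univ : S ≠ univ := by
    rintro rfl
    have : (0 : ℝ) < #(univ : Finset V) := by exact_mod_cast hne.card_pos
    rw [card_univ] at hS this
    linarith
  have hmin : min (#S : ℝ) (#(univ \ S) : ℝ) = #S := by
    rw [card_univ_sdiff, Nat.cast_sub (card_le_univ S), min_eq_left]
    linarith
  simpa [hmin] using hexp S hne hne_univ

end Cut

def orient {V : Type*} [LinearOrder V] (p : V × V) : V × V := if p.1 < p.2 then p else p.swap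

theorem Sym2.mk_orient {V : Type*} [LinearOrder V] (p : V × V) :
    s((orient p).1, (orient p).2) = s(p.1, p.2) := by
  obtain ⟨a, b⟩ := p
  unfold orient
  split_ifs
  · rfl
  · exact Sym2.eq_swap

section Embedding

variable {V : Type*} [Fintype V] [LinearOrder V] {G H : SimpleGraph V}

/-- The edges of `H` whose embedding walk passes through `e`, each listed once as `(u, v)`
with `u < v`: the set whose size the congestion bounds. -/
noncomputable def embeddingLoad (P : ∀ u v : V, H.Adj u v → G.Walk u v) (e : Sym2 V) :
    Finset (V × V) :=
  univ.filter (fun p : V × V => p.1 < p.2 ∧ ∃ h : H.Adj p.1 p.2, e ∈ (P p.1 p.2 h).edges)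

theorem exists_cutDart_orient_mem_embeddingLoad (P : ∀ u v : V, H.Adj u v → G.Walk u v)
    {S : Finset V} {p : V × V} (hp : p ∈ cutDarts H S) :
    ∃ q ∈ cutDarts G S, orient p ∈ embeddingLoad P s(q.1, q.2) := by
  obtain ⟨hp1, hp2, hadj⟩ := mem_cutDarts.1 hp
  unfold orient
  split_ifs with hlt
  · obtain ⟨q, hq, he⟩ := (P p.1 p.2 hadj).exists_cutDart_mem_edges hp1 hp2
    exact ⟨q, hq, mem_filter.2 ⟨mem_univ _, hlt, hadj, he⟩⟩
  · obtain ⟨q, hq, he⟩ := (P p.2 p.1 hadj.symm).reverse.exists_cutDart_mem_edges hp1 hp2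
    refine ⟨q, hq, mem_filter.2 ⟨mem_univ _, ?_, hadj.symm, ?_⟩⟩
    · exact lt_of_le_of_ne (not_lt.1 hlt) hadj.ne.symm
    · simpa using he

theorem cutCard_le_sum_card_embeddingLoad (P : ∀ u v : V, H.Adj u v → G.Walk u v)
    (S : Finset V) :
    cutCard H S ≤ ∑ q ∈ cutDarts G S, #(embeddingLoad P s(q.1, q.2)) := by
  have horient_inj : Set.InjOn orient (cutDarts H S : Set (V × V)) := by
    intro p hp q hq hpq
    refine Sym2.injOn_mk_uncurry_crossing S ?_ ?_ ?_
    · exact ⟨(mem_cutDarts.1 hp).1, (mem_cutDarts.1 hp).2.1⟩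
    · exact ⟨(mem_cutDarts.1 hq).1, (mem_cutDarts.1 hq).2.1⟩
    · change s(p.1, p.2) = s(q.1, q.2)
      rw [← Sym2.mk_orient p, ← Sym2.mk_orient q, hpq]
  refine (card_le_card_of_injOn orient (fun p hp => ?_) horient_inj).trans card_biUnion_le
  obtain ⟨q, hq, hload⟩ := exists_cutDart_orient_mem_embeddingLoad P hp
  exact mem_biUnion.2 ⟨q, hq, hload⟩

theorem cutCard_le_mul_cutCard {C : ℝ} (P : ∀ u v : V, H.Adj u v → G.Walk u v)
    (hcong : ∀ e ∈ G.edgeSet, (#(embeddingLoad P e) : ℝ) ≤ C) (S : Finset V) :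
    (cutCard H S : ℝ) ≤ C * cutCard G S := by
  calc (cutCard H S : ℝ)
      ≤ ∑ q ∈ cutDarts G S, (#(embeddingLoad P s(q.1, q.2)) : ℝ) := by
        exact_mod_cast cutCard_le_sum_card_embeddingLoad P S
    _ ≤ ∑ _q ∈ cutDarts G S, C := sum_le_sum fun q hq => hcong _ (mem_cutDarts.1 hq).2.2
    _ = C * cutCard G S := by simp [cutCard_eq_card_cutDarts, mul_comm]

end Embedding

theorem stmt1_general {V : Type*} [Fintype V] [LinearOrder V] (G H H' : SimpleGraph V)
    (ψ C b : ℝ) (hψ : 0 < ψ) (hC : 0 < C)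
    (hexp : ∀ S : Finset V, S.Nonempty → S ≠ Finset.univ →
      ψ * min (S.card : ℝ) ((Finset.univ \ S).card : ℝ) ≤ (cutCard H S : ℝ))
    (hmiss : ((H.edgeFinset \ H'.edgeFinset).card : ℝ) ≤ ψ / 2 * b * (Fintype.card V))
    (P : ∀ u v : V, H'.Adj u v → G.Walk u v)
    (hcong : ∀ e ∈ G.edgeSet,
      ((Finset.univ.filter (fun p : V × V => p.1 < p.2 ∧
          ∃ h : H'.Adj p.1 p.2, e ∈ (P p.1 p.2 h).edges)).card : ℝ) ≤ C) :
    ∀ S : Finset V, b * (Fintype.card V) ≤ (S.card : ℝ) →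
      2 * (S.card : ℝ) ≤ (Fintype.card V) →
      ψ / (2 * C) * (S.card : ℝ) ≤ (cutCard G S : ℝ) := by
  intro S hbS hS
  have hexpS := le_cutCard_of_two_mul_card_le hexp hS
  have hmissing : (cutCard H S : ℝ) ≤ cutCard H' S + #(H.edgeFinset \ H'.edgeFinset) := by
    exact_mod_cast cutCard_le_cutCard_add_card_sdiff H' H S
  have hrouted := cutCard_le_mul_cutCard P hcong S
  have hmissS : (#(H.edgeFinset \ H'.edgeFinset) : ℝ) ≤ ψ / 2 * #S :=
    calc _ ≤ ψ / 2 * b * Fintype.card V := hmiss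
      _ ≤ ψ / 2 * #S := by rw [mul_assoc]; gcongr
  rw [div_mul_eq_mul_div, div_le_iff₀ (by positivity)]
  linarith

/-- If `H` is a `ψ`-expander on `n` vertices, `H' ⊆ H` misses at
most `(ψ/2)·b·n` edges of `H`, and `H'` embeds into `G` with congestion at most `C`,
then every cut `(S, S̄)` with `b·n ≤ |S| ≤ n/2` has sparsity at least `ψ/(2C)`,
i.e. `|E_G(S, S̄)| ≥ (ψ/(2C))·|S|`. -/
theorem stmt1 {V : Type*} [Fintype V] [LinearOrder V] (G H H' : SimpleGraph V)
    (ψ C b : ℝ) (hψ : 0 < ψ) (hC : 0 < C) (hb0 : 0 ≤ b) (hb1 : b ≤ 1)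
    (hsub : H' ≤ H)
    (hexp : ∀ S : Finset V, S.Nonempty → S ≠ Finset.univ →
      ψ * min (S.card : ℝ) ((Finset.univ \ S).card : ℝ) ≤ (cutCard H S : ℝ))
    (hmiss : ((H.edgeFinset \ H'.edgeFinset).card : ℝ) ≤ ψ / 2 * b * (Fintype.card V))
    (P : ∀ u v : V, H'.Adj u v → G.Walk u v)
    (hpath : ∀ (u v : V) (h : H'.Adj u v), (P u v h).IsPath)
    (hcong : ∀ e ∈ G.edgeSet,
      ((Finset.univ.filter (fun p : V × V => p.1 < p.2 ∧
          ∃ h : H'.Adj p.1 p.2, e ∈ (P p.1 p.2 h).edges)).card : ℝ) ≤ C) :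
    ∀ S : Finset V, b * (Fintype.card V) ≤ (S.card : ℝ) →
      2 * (S.card : ℝ) ≤ (Fintype.card V) →
      ψ / (2 * C) * (S.card : ℝ) ≤ (cutCard G S : ℝ) :=
  stmt1_general G H H' ψ C b hψ hC hexp hmiss P hcong
end

section
/- Let G = (V,E) be a graph with integer edge weights w ≥ 1, z ∈ V, r ≥ 1 an integer. With Φ defined as in the ball-growing potential (φ(z,r,e) = |dist_w(z,x) − dist_w(z,y)| if both endpoints are within distance r of z; r − (distance of nearer endpoint) if exactly one endpoint is within distance r; 0 otherwise), the increment Φ(z, r+1) − Φ(z, r) equals the number of edges of G with exactly one endpoint in the ball B_w(z, r) = {x : dist_w(z,x) ≤ r}. -/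
open Finset
open scoped Classical

/-- Weighted shortest-path distance (in `ℕ∞`) in `G` with respect to edge
weights `w`. -/
noncomputable def distW {V : Type*} (G : SimpleGraph V) (w : Sym2 V → ℕ) (u v : V) : ℕ∞ :=
  ⨅ p : G.Walk u v, ((p.edges.map w).sum : ℕ∞)

/-- The per-edge ball-growing potential `φ(z,r,e)` for an edge `e = (x,y)`:
`|d(z,x) − d(z,y)|` if both distances are `≤ r`; `r − min(d(z,x), d(z,y))` if
exactly one of them is `≤ r`; and `0` otherwise. -/
noncomputable def phiEdge {V : Type*} (d : V → ℕ∞) (r : ℕ) : Sym2 V → ℕ∞ :=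
  Sym2.lift ⟨fun x y =>
    if d x ≤ r ∧ d y ≤ r then max (d x) (d y) - min (d x) (d y)
    else if d x ≤ r ∨ d y ≤ r then (r : ℕ∞) - min (d x) (d y)
    else 0,
    by
      intro x y
      simp only [and_comm, or_comm, max_comm (d x) (d y), min_comm (d x) (d y)]⟩

/-- The ball-growing potential `Φ(z,r) = Σ_{e ∈ E} φ(z,r,e)`. -/
noncomputable def Phi {V : Type*} [Fintype V] [DecidableEq V] (G : SimpleGraph V)
    (w : Sym2 V → ℕ) (z : V) (r : ℕ) : ℕ∞ :=
  ∑ e ∈ G.edgeFinset, phiEdge (distW G w z) r e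


lemma cmin (m n : ℕ) : ((min m n : ℕ) : ℕ∞) = min ↑m ↑n := by
  rcases le_total m n with h|h <;>
    simp [min_eq_left, min_eq_right, h, Nat.cast_le.2 h]

lemma cmax (m n : ℕ) : ((max m n : ℕ) : ℕ∞) = max ↑m ↑n := by
  rcases le_total m n with h|h <;>
    simp [max_eq_left, max_eq_right, h, Nat.cast_le.2 h]

lemma key (a b : ℕ∞) (r : ℕ) :
    (if a ≤ ((r+1 : ℕ) : ℕ∞) ∧ b ≤ ((r+1 : ℕ) : ℕ∞) then max a b - min a b
     else if a ≤ ((r+1 : ℕ) : ℕ∞) ∨ b ≤ ((r+1 : ℕ) : ℕ∞) then ((r+1 : ℕ) : ℕ∞) - min a b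
     else 0)
    = (if a ≤ (r : ℕ∞) ∧ b ≤ (r : ℕ∞) then max a b - min a b
       else if a ≤ (r : ℕ∞) ∨ b ≤ (r : ℕ∞) then (r : ℕ∞) - min a b
       else 0)
      + (if (a ≤ (r : ℕ∞) ∧ ¬ b ≤ (r : ℕ∞)) ∨ (b ≤ (r : ℕ∞) ∧ ¬ a ≤ (r : ℕ∞)) then 1 else 0) := by
  induction a using ENat.recTopCoe with
  | top =>
    induction b using ENat.recTopCoe with
    | top =>
      have h : ((r+1:ℕ):ℕ∞) ≠ ⊤ := ENat.coe_ne_top _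
      have h2 : ((r:ℕ):ℕ∞) ≠ ⊤ := ENat.coe_ne_top _
      push_cast at h
      simp [top_le_iff, h, h2]
    | coe n =>
      simp only [top_le_iff, ENat.coe_ne_top, false_and, and_false, if_false, false_or,
        or_false, and_true, not_false_iff, min_eq_right (le_top : (n:ℕ∞) ≤ ⊤), Nat.cast_le,
        ← ENat.coe_sub, ← Nat.cast_one (R := ℕ∞), ← Nat.cast_zero (R := ℕ∞)]
      split_ifs <;> norm_cast <;> omega
  | coe m =>
    induction b using ENat.recTopCoe with
    | top =>
      simp only [top_le_iff, ENat.coe_ne_top, false_and, and_false, if_false, false_or,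
        or_false, and_true, true_and, not_false_iff, min_eq_left (le_top : (m:ℕ∞) ≤ ⊤), Nat.cast_le,
        ← ENat.coe_sub, ← Nat.cast_one (R := ℕ∞), ← Nat.cast_zero (R := ℕ∞)]
      split_ifs <;> norm_cast <;> omega
    | coe n =>
      simp only [Nat.cast_le, ← cmin, ← cmax, ← ENat.coe_sub,
        ← Nat.cast_one (R := ℕ∞), ← Nat.cast_zero (R := ℕ∞)]
      split_ifs <;> norm_cast <;> omega

lemma phiEdge_succ {V : Type*} (d : V → ℕ∞) (r : ℕ) (e : Sym2 V) :
    phiEdge d (r+1) e = phiEdge d r e +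
      (if (∃ x y, e = s(x,y) ∧ d x ≤ (r : ℕ∞) ∧ ¬ d y ≤ (r : ℕ∞)) then 1 else 0) := by
  induction e using Sym2.ind with
  | _ x y =>
    have hiff : (∃ x' y', s(x,y) = s(x',y') ∧ d x' ≤ (r : ℕ∞) ∧ ¬ d y' ≤ (r : ℕ∞)) ↔
        ((d x ≤ (r : ℕ∞) ∧ ¬ d y ≤ (r : ℕ∞)) ∨ (d y ≤ (r : ℕ∞) ∧ ¬ d x ≤ (r : ℕ∞))) := by
      constructor
      · rintro ⟨x', y', hxy, h1, h2⟩
        rw [Sym2.eq_iff] at hxy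
        rcases hxy with ⟨rfl, rfl⟩ | ⟨rfl, rfl⟩
        · exact Or.inl ⟨h1, h2⟩
        · exact Or.inr ⟨h1, h2⟩
      · rintro (⟨h1, h2⟩ | ⟨h1, h2⟩)
        · exact ⟨x, y, rfl, h1, h2⟩
        · exact ⟨y, x, Sym2.eq_swap.symm, h1, h2⟩
    simp only [phiEdge, Sym2.lift_mk, hiff]
    exact_mod_cast key (d x) (d y) r

lemma phiEdge_ne_top {V : Type*} (d : V → ℕ∞) (r : ℕ) (e : Sym2 V) :
    phiEdge d r e ≠ ⊤ := by
  induction e using Sym2.ind with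
  | _ x y =>
    simp only [phiEdge, Sym2.lift_mk]
    split_ifs with h1 h2
    · exact ne_top_of_le_ne_top (ENat.coe_ne_top r)
        (le_trans tsub_le_self (max_le h1.1 h1.2))
    · exact ne_top_of_le_ne_top (ENat.coe_ne_top r) tsub_le_self
    · simp

/-- For integer weights `w ≥ 1` and an integer radius `r ≥ 1`,
the increment `Φ(z, r+1) − Φ(z, r)` equals the number of edges of `G` with
exactly one endpoint in the ball `B_w(z,r) = {x : dist_w(z,x) ≤ r}`. -/
theorem stmt7 {V : Type*} [Fintype V] [DecidableEq V] (G : SimpleGraph V)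
    (w : Sym2 V → ℕ) (hw : ∀ e ∈ G.edgeSet, 1 ≤ w e) (z : V) (r : ℕ) (hr : 1 ≤ r) :
    Phi G w z (r + 1) - Phi G w z r =
      ((G.edgeFinset.filter (fun e => ∃ x y, e = s(x, y) ∧
          distW G w z x ≤ r ∧ ¬ distW G w z y ≤ r)).card : ℕ∞) := by
  classical
  have hne : Phi G w z r ≠ ⊤ := by
    rw [Phi]
    exact WithTop.sum_ne_top.2 fun e _ => phiEdge_ne_top _ _ _
  have hsucc : Phi G w z (r + 1) = Phi G w z r +
      ((G.edgeFinset.filter (fun e => ∃ x y, e = s(x, y) ∧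
          distW G w z x ≤ (r : ℕ∞) ∧ ¬ distW G w z y ≤ (r : ℕ∞))).card : ℕ∞) := by
    rw [Phi, Phi, ← Finset.sum_boole, ← Finset.sum_add_distrib]
    refine Finset.sum_congr rfl fun e _ => (phiEdge_succ _ _ _).trans ?_
    split_ifs <;> rfl
  rw [hsucc, (ENat.addLECancellable_of_ne_top hne).add_tsub_cancel_left]
end

section
/- Let G = (V,E) be a graph with integer weights w ≥ 1, and suppose u, v satisfy dist_w(u,v) > D for an integer D > 4·log₂(‖w‖₁). Then there exists a nonempty set S ⊆ V with |S| ≤ |V|/2 such that the number of edges leaving S satisfies |E_G(S, V\S)| ≤ 4·w(S)·log₂(‖w‖₁)/D, where w(S) denotes the total weight of edges with at least one endpoint in S. -/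
/-!
Ball growing. Viewing each edge `e` as a segment of length `w e`, let `vol(r)` be the total length
within distance `r` of `z`. Every edge leaving the ball `B(z, r)` gains a unit of length inside
`B(z, r + 1)`, so `vol(r) + |∂B(z, r)| ≤ vol(r + 1)`; also `vol(r) + |∂B(z, r)| ≤ w(B(z, r))` and
`vol(r) ≤ ‖w‖₁`. If `|∂B(z, r)| > c · w(B(z, r))` for all `r ≤ R`, then `vol` grows by a factor
`1 + c` per step, which is impossible once `‖w‖₁ < (1 + c) ^ R`. With `c = 4 log₂‖w‖₁ / D`
and `R = ⌊(D - 1) / 2⌋`, Bernoulli's inequality `2 ^ c ≤ 1 + c` gives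
`‖w‖₁ = 2 ^ (log₂‖w‖₁) < (1 + c) ^ R`. The good balls around `u` and `v` are disjoint since
`dist(u, v) > D ≥ 2R`, and the smaller one has at most `|V| / 2` vertices.
If `‖w‖₁ ≤ 1` there is at most one edge, so `u` or `v` is isolated.
-/

open Finset
open scoped Classical

section distW

variable {V : Type*} (G : SimpleGraph V) (w : Sym2 V → ℕ)

lemma distW_le_walk {x y : V} (p : G.Walk x y) : distW G w x y ≤ ((p.edges.map w).sum : ℕ∞) :=
  iInf_le _ p

@[simp]
lemma distW_self (x : V) : distW G w x x = 0 :=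
  nonpos_iff_eq_zero.mp <| by simpa using distW_le_walk G w (SimpleGraph.Walk.nil : G.Walk x x)

lemma distW_comm (x y : V) : distW G w x y = distW G w y x := by
  have key : ∀ a b : V, distW G w a b ≤ distW G w b a := fun a b =>
    le_iInf fun q => by simpa [List.map_reverse] using distW_le_walk G w q.reverse
  exact le_antisymm (key x y) (key y x)

lemma distW_triangle (x y z : V) : distW G w x z ≤ distW G w x y + distW G w y z :=
  calc distW G w x z
      ≤ ⨅ (p : G.Walk x y) (q : G.Walk y z), (((p.append q).edges.map w).sum : ℕ∞) :=
        le_iInf₂ fun p q => distW_le_walk G w _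
    _ = distW G w x y + distW G w y z := by
        simp only [distW, ENat.iInf_add, ENat.add_iInf, SimpleGraph.Walk.edges_append,
          List.map_append, List.sum_append, Nat.cast_add]
        exact iInf_comm

lemma distW_le_of_adj {x y : V} (h : G.Adj x y) : distW G w x y ≤ w s(x, y) := by
  simpa using distW_le_walk G w (SimpleGraph.Walk.cons h SimpleGraph.Walk.nil)

noncomputable def distToEdge (z : V) : Sym2 V → ℕ∞ :=
  Sym2.lift ⟨fun x y => min (distW G w z x) (distW G w z y), fun _ _ => min_comm _ _⟩

@[simp]
lemma distToEdge_mk (z x y : V) :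
    distToEdge G w z s(x, y) = min (distW G w z x) (distW G w z y) :=
  rfl

/-- The length of the part of the edge `e`, viewed as a segment of length `w e`, that lies within
distance `r` of `z`. -/
noncomputable def edgeVolume (z : V) (r : ℕ) (e : Sym2 V) : ℕ :=
  min (w e) ((r - distToEdge G w z e).toNat)

lemma edgeVolume_le_succ (z : V) (r : ℕ) (e : Sym2 V) :
    edgeVolume G w z r e ≤ edgeVolume G w z (r + 1) e := by
  refine min_le_min le_rfl (ENat.toNat_le_toNat (tsub_le_tsub_right ?_ _) ?_)
  · exact_mod_cast r.le_succ
  · exact ne_top_of_le_ne_top (ENat.natCast_ne_top (r + 1)) tsub_le_self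

end distW

section Ball

variable {V : Type*} [Fintype V] (G : SimpleGraph V) (w : Sym2 V → ℕ)

noncomputable def weightedBall (z : V) (r : ℕ) : Finset V :=
  univ.filter fun x => distW G w z x ≤ r

variable {G w} in
lemma mem_weightedBall {z x : V} {r : ℕ} : x ∈ weightedBall G w z r ↔ distW G w z x ≤ r := by
  simp [weightedBall]

lemma mem_weightedBall_self (z : V) (r : ℕ) : z ∈ weightedBall G w z r := by
  simp [mem_weightedBall]

lemma edgeVolume_eq_zero_of_forall_notMem {z : V} {r : ℕ} {e : Sym2 V}
    (he : ∀ x ∈ weightedBall G w z r, x ∉ e) : edgeVolume G w z r e = 0 := by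
  suffices h : (r : ℕ∞) ≤ distToEdge G w z e by simp [edgeVolume, tsub_eq_zero_of_le h]
  induction e using Sym2.inductionOn with
  | hf x y =>
    have hx : ¬ distW G w z x ≤ r := fun h => he x (mem_weightedBall.mpr h) (Sym2.mem_mk_left x y)
    have hy : ¬ distW G w z y ≤ r := fun h => he y (mem_weightedBall.mpr h) (Sym2.mem_mk_right x y)
    push Not at hx hy
    exact (lt_min hx hy).le

noncomputable def ballVolume (z : V) (r : ℕ) : ℕ :=
  ∑ e ∈ G.edgeFinset, edgeVolume G w z r e

lemma ballVolume_le (z : V) (r : ℕ) : ballVolume G w z r ≤ ∑ e ∈ G.edgeFinset, w e :=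
  sum_le_sum fun _ _ => min_le_left _ _

end Ball

section BallGrowing

variable {V : Type*} [Fintype V] [DecidableEq V] (G : SimpleGraph V) (w : Sym2 V → ℕ)

noncomputable def edgeBoundary (S : Finset V) : Finset (Sym2 V) :=
  G.edgeFinset.filter fun e => ∃ x ∈ S, ∃ y ∉ S, e = s(x, y)

noncomputable def incidentWeight (S : Finset V) : ℕ :=
  ∑ e ∈ G.edgeFinset.filter (fun e => ∃ x ∈ S, x ∈ e), w e

variable {G} in
lemma exists_mem_of_mem_edgeBoundary {S : Finset V} {e : Sym2 V} (he : e ∈ edgeBoundary G S) :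
    ∃ x ∈ S, x ∈ e := by
  obtain ⟨-, x, hx, y, -, rfl⟩ := mem_filter.mp he
  exact ⟨x, hx, Sym2.mem_mk_left x y⟩

lemma edgeVolume_lt_of_mem_edgeBoundary {z : V} {r : ℕ} {e : Sym2 V}
    (he : e ∈ edgeBoundary G (weightedBall G w z r)) :
    edgeVolume G w z r e < w e ∧ edgeVolume G w z r e < edgeVolume G w z (r + 1) e := by
  obtain ⟨hE, x, hx, y, hy, rfl⟩ := mem_filter.mp he
  rw [mem_weightedBall] at hx hy
  push Not at hy
  obtain ⟨d, hd⟩ := ENat.ne_top_iff_exists.mp (ne_top_of_le_ne_top (ENat.natCast_ne_top r) hx)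
  have hstep : distW G w z y ≤ distW G w z x + w s(x, y) :=
    (distW_triangle G w z x y).trans
      (add_le_add le_rfl (distW_le_of_adj G w (G.mem_edgeFinset.mp hE)))
  have hdist : distToEdge G w z s(x, y) = d := by
    rw [distToEdge_mk, min_eq_left (hx.trans hy.le), hd]
  rw [← hd] at hx hstep
  have hdr : d ≤ r := by exact_mod_cast hx
  have hlong : r < d + w s(x, y) := by exact_mod_cast hy.trans_le hstep
  simp only [edgeVolume, hdist, ← ENat.natCast_sub, ENat.toNat_natCast]
  omega

lemma ballVolume_add_card_edgeBoundary_eq (z : V) (r : ℕ) :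
    ballVolume G w z r + #(edgeBoundary G (weightedBall G w z r)) =
      ∑ e ∈ G.edgeFinset, (edgeVolume G w z r e +
        if e ∈ edgeBoundary G (weightedBall G w z r) then 1 else 0) := by
  have hsub : edgeBoundary G (weightedBall G w z r) ⊆ G.edgeFinset := filter_subset _ _
  rw [ballVolume, sum_add_distrib, sum_boole, filter_mem_eq_inter, inter_eq_right.mpr hsub,
    Nat.cast_id]

lemma ballVolume_add_card_edgeBoundary_le_succ (z : V) (r : ℕ) :
    ballVolume G w z r + #(edgeBoundary G (weightedBall G w z r)) ≤ ballVolume G w z (r + 1) := by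
  rw [ballVolume_add_card_edgeBoundary_eq]
  refine sum_le_sum fun e _ => ?_
  split_ifs with he
  · exact (edgeVolume_lt_of_mem_edgeBoundary G w he).2
  · exact edgeVolume_le_succ G w z r e

lemma ballVolume_add_card_edgeBoundary_le_incidentWeight (z : V) (r : ℕ) :
    ballVolume G w z r + #(edgeBoundary G (weightedBall G w z r)) ≤
      incidentWeight G w (weightedBall G w z r) := by
  rw [ballVolume_add_card_edgeBoundary_eq, incidentWeight, sum_filter]
  refine sum_le_sum fun e _ => ?_
  by_cases hT : ∃ x ∈ weightedBall G w z r, x ∈ e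
  · rw [if_pos hT]
    split_ifs with he
    · exact (edgeVolume_lt_of_mem_edgeBoundary G w he).1
    · exact min_le_left _ _
  · have he : e ∉ edgeBoundary G (weightedBall G w z r) :=
      fun he => hT (exists_mem_of_mem_edgeBoundary he)
    rw [if_neg he, if_neg hT, add_zero,
      edgeVolume_eq_zero_of_forall_notMem G w fun x hx hxe => hT ⟨x, hx, hxe⟩]

lemma one_add_mul_ballVolume_le_succ (z : V) (r : ℕ) {c : ℝ} (hc : 0 ≤ c)
    (hcut : c * incidentWeight G w (weightedBall G w z r) ≤
      #(edgeBoundary G (weightedBall G w z r))) :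
    (1 + c) * ballVolume G w z r ≤ ballVolume G w z (r + 1) := by
  have hsucc : (ballVolume G w z r + #(edgeBoundary G (weightedBall G w z r)) : ℝ) ≤
      ballVolume G w z (r + 1) := by exact_mod_cast ballVolume_add_card_edgeBoundary_le_succ G w z r
  have hvol : (ballVolume G w z r : ℝ) ≤ incidentWeight G w (weightedBall G w z r) := by
    exact_mod_cast (Nat.le_add_right _ _).trans
      (ballVolume_add_card_edgeBoundary_le_incidentWeight G w z r)
  nlinarith

lemma exists_card_edgeBoundary_weightedBall_le (z : V) {c : ℝ} (hc : 0 ≤ c) {R : ℕ}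
    (hR : ((∑ e ∈ G.edgeFinset, w e : ℕ) : ℝ) < (1 + c) ^ R) :
    ∃ r ≤ R, (#(edgeBoundary G (weightedBall G w z r)) : ℝ) ≤
      c * incidentWeight G w (weightedBall G w z r) := by
  by_contra! hbad
  have hgrow : ∀ k ≤ R, (1 + c) ^ k ≤ (ballVolume G w z (k + 1) : ℝ) := by
    intro k
    induction k with
    | zero =>
      intro _
      have hcut : 0 < #(edgeBoundary G (weightedBall G w z 0)) := by
        exact_mod_cast (mul_nonneg hc (Nat.cast_nonneg _)).trans_lt (hbad 0 R.zero_le)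
      have := ballVolume_add_card_edgeBoundary_le_succ G w z 0
      rw [pow_zero, Nat.one_le_cast]
      omega
    | succ k ih =>
      intro hk
      calc (1 + c) ^ (k + 1) = (1 + c) * (1 + c) ^ k := pow_succ' _ _
        _ ≤ (1 + c) * ballVolume G w z (k + 1) := by gcongr; exact ih (by omega)
        _ ≤ ballVolume G w z (k + 1 + 1) :=
          one_add_mul_ballVolume_le_succ G w z (k + 1) hc (hbad (k + 1) hk).le
  have hle : (ballVolume G w z (R + 1) : ℝ) ≤ ((∑ e ∈ G.edgeFinset, w e : ℕ) : ℝ) := by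
    exact_mod_cast ballVolume_le G w z (R + 1)
  linarith [hgrow R le_rfl]

lemma exists_card_edgeBoundary_le_of_lt_distW {c : ℝ} (hc : 0 ≤ c) {R : ℕ}
    (hR : ((∑ e ∈ G.edgeFinset, w e : ℕ) : ℝ) < (1 + c) ^ R) {u v : V}
    (huv : ((2 * R : ℕ) : ℕ∞) < distW G w u v) :
    ∃ S : Finset V, S.Nonempty ∧ 2 * #S ≤ Fintype.card V ∧
      (#(edgeBoundary G S) : ℝ) ≤ c * incidentWeight G w S := by
  obtain ⟨ru, hru, hu⟩ := exists_card_edgeBoundary_weightedBall_le G w u hc hR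
  obtain ⟨rv, hrv, hv⟩ := exists_card_edgeBoundary_weightedBall_le G w v hc hR
  have hdisj : Disjoint (weightedBall G w u ru) (weightedBall G w v rv) := by
    refine disjoint_left.mpr fun x hxu hxv => huv.not_ge ?_
    rw [mem_weightedBall] at hxu hxv
    calc distW G w u v ≤ distW G w u x + distW G w v x :=
          distW_comm G w v x ▸ distW_triangle G w u x v
      _ ≤ ru + rv := add_le_add hxu hxv
      _ ≤ ((2 * R : ℕ) : ℕ∞) := by exact_mod_cast (by omega : ru + rv ≤ 2 * R)
  have hcard : #(weightedBall G w u ru) + #(weightedBall G w v rv) ≤ Fintype.card V :=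
    card_union_of_disjoint hdisj ▸ card_le_univ _
  rcases le_total #(weightedBall G w u ru) #(weightedBall G w v rv) with hle | hle
  · exact ⟨_, ⟨u, mem_weightedBall_self G w u ru⟩, by omega, hu⟩
  · exact ⟨_, ⟨v, mem_weightedBall_self G w v rv⟩, by omega, hv⟩

end BallGrowing

lemma lt_one_add_pow_of_four_logb_lt {M : ℝ} {D : ℕ} (hM : 2 ≤ M)
    (hD : 4 * Real.logb 2 M < D) : M < (1 + 4 * Real.logb 2 M / D) ^ ((D - 1) / 2) := by
  set L := Real.logb 2 M
  set R := (D - 1) / 2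
  have hL : 1 ≤ L := by
    simpa using Real.logb_le_logb_of_le (b := 2) (by norm_num) (by norm_num) hM
  have hDpos : (0 : ℝ) < D := by linarith
  have hDR : D < 4 * R := by
    have : (4 : ℝ) < D := by linarith
    have : 4 < D := by exact_mod_cast this
    omega
  set c := 4 * L / D
  have hc1 : c ≤ 1 := (div_le_one hDpos).mpr (by linarith)
  have hLc : L < c * R := by
    rw [div_mul_eq_mul_div, lt_div_iff₀ hDpos]
    have : (D : ℝ) < 4 * R := by exact_mod_cast hDR
    nlinarith
  have hBernoulli : (2 : ℝ) ^ c ≤ 1 + c := by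
    simpa [one_add_one_eq_two] using
      rpow_one_add_le_one_add_mul_self (s := 1) (by norm_num) (by positivity) hc1
  calc M = 2 ^ L := (Real.rpow_logb two_pos (by norm_num) (by linarith)).symm
    _ < 2 ^ (c * R) := Real.rpow_lt_rpow_of_exponent_lt one_lt_two hLc
    _ = (2 ^ c) ^ R := by rw [Real.rpow_mul zero_le_two, Real.rpow_natCast]
    _ ≤ (1 + c) ^ R := by gcongr

lemma exists_forall_notMem_edge_of_sum_le_one {V : Type*} [Fintype V] (G : SimpleGraph V)
    {w : Sym2 V → ℕ} (hw : ∀ e ∈ G.edgeSet, 1 ≤ w e) (hM : ∑ e ∈ G.edgeFinset, w e ≤ 1)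
    {u v : V} (huv : 1 < distW G w u v) : ∃ z, ∀ e ∈ G.edgeFinset, z ∉ e := by
  by_contra! h
  obtain ⟨e, he, hue⟩ := h u
  obtain ⟨e', he', hve⟩ := h v
  have hne : u ≠ v := by rintro rfl; simp at huv
  have hcard : #G.edgeFinset ≤ 1 := by
    have := card_nsmul_le_sum G.edgeFinset w 1 fun e he => hw e (G.mem_edgeFinset.mp he)
    rw [smul_eq_mul, mul_one] at this
    exact this.trans hM
  obtain rfl : e' = e := card_le_one.mp hcard e' he' e he
  obtain rfl : e' = s(u, v) := (Sym2.mem_and_mem_iff hne).mp ⟨hue, hve⟩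
  have hwM : w s(u, v) ≤ 1 := (single_le_sum (fun _ _ => Nat.zero_le _) he).trans hM
  exact huv.not_ge <| (distW_le_of_adj G w (G.mem_edgeFinset.mp he)).trans (by exact_mod_cast hwM)

/-- If `dist_w(u,v) > D` for an integer `D > 4·log₂‖w‖₁` (with
integer weights `w ≥ 1`), then there is a nonempty `S ⊆ V` with `|S| ≤ |V|/2`
such that `|E_G(S, V\S)| ≤ 4·w(S)·log₂‖w‖₁/D`, where `w(S)` is the total weight
of edges with at least one endpoint in `S`. -/
theorem stmt8 {V : Type*} [Fintype V] [DecidableEq V] (G : SimpleGraph V)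
    (w : Sym2 V → ℕ) (hw : ∀ e ∈ G.edgeSet, 1 ≤ w e) (u v : V) (D : ℕ)
    (hD : 4 * Real.logb 2 (∑ e ∈ G.edgeFinset, w e) < D)
    (hfar : (D : ℕ∞) < distW G w u v) :
    ∃ S : Finset V, S.Nonempty ∧ 2 * S.card ≤ Fintype.card V ∧
      ((G.edgeFinset.filter (fun e => ∃ x ∈ S, ∃ y ∉ S, e = s(x, y))).card : ℝ)
        ≤ 4 * (∑ e ∈ G.edgeFinset.filter (fun e => ∃ x ∈ S, x ∈ e), (w e : ℝ))
            * Real.logb 2 (∑ e ∈ G.edgeFinset, w e) / D := by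
  simp only [← Nat.cast_sum] at hD ⊢
  set M := ∑ e ∈ G.edgeFinset, w e
  have hL : 0 ≤ Real.logb 2 M := div_nonneg (Real.log_natCast_nonneg M) (Real.log_nonneg one_le_two)
  rcases le_or_gt M 1 with hM | hM
  · have hD : 1 ≤ D := by exact_mod_cast (by linarith : (0 : ℝ) < D)
    obtain ⟨z, hz⟩ := exists_forall_notMem_edge_of_sum_le_one G hw hM
      (hfar.trans_le' (by exact_mod_cast hD))
    have huv : u ≠ v := by rintro rfl; simp at hfar
    refine ⟨{z}, singleton_nonempty z, ?_, ?_⟩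
    · exact (Fintype.one_lt_card_iff_nontrivial.mpr ⟨u, v, huv⟩ : 1 < Fintype.card V)
    · rw [filter_eq_empty_iff.mpr fun e he ⟨x, hx, y, _, hxy⟩ =>
        hz e he (mem_singleton.mp hx ▸ hxy ▸ Sym2.mem_mk_left x y), card_empty, Nat.cast_zero]
      exact div_nonneg (mul_nonneg (by positivity) hL) D.cast_nonneg
  · obtain ⟨S, hS, hcard, hcut⟩ := exists_card_edgeBoundary_le_of_lt_distW G w
      (c := 4 * Real.logb 2 M / D) (by positivity)
      (lt_one_add_pow_of_four_logb_lt (by exact_mod_cast hM) hD)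
      (hfar.trans_le' (by exact_mod_cast (by omega : 2 * ((D - 1) / 2) ≤ D)))
    refine ⟨S, hS, hcard, hcut.trans_eq ?_⟩
    rw [incidentWeight]
    ring
end

section
/- In the degree-reduction construction, let A ⊆ V(Ĝ) be any vertex set, and S = {u ∈ V : |X_u ∩ A| ≥ |X_u \ A|}. Then |E_G(S, V\S)| ≤ (1 + 1/ψ₀)·|E_{Ĝ}(A, V(Ĝ)\A)|. -/
open Finset
open scoped Classical

/-- The set of edges of `G` with one endpoint in `A` and the other in `B`. -/
noncomputable def cutE {V : Type*} [Fintype V] (G : SimpleGraph V)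
    (A B : Finset V) : Finset (Sym2 V) :=
  G.edgeFinset.filter (fun e => ∃ x ∈ A, ∃ y ∈ B, e = s(x, y))

private theorem mem_cutE {V : Type*} [Fintype V] (G : SimpleGraph V)
    (A B : Finset V) (e : Sym2 V) :
    e ∈ cutE G A B ↔ e ∈ G.edgeFinset ∧ ∃ x ∈ A, ∃ y ∈ B, e = s(x, y) := by
  simp [cutE]

private theorem aux11 {V Vh : Type*} [Fintype V] [Fintype Vh] [DecidableEq V] [DecidableEq Vh]
    (G : SimpleGraph V) (Gh : SimpleGraph Vh) (π : Vh → V) (ψ₀ : ℝ) (hψ₀ : 0 < ψ₀)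
    (A : Finset Vh) (S T : Finset V)
    (hS : ∀ u : V, u ∈ S ↔
      (Finset.univ.filter (fun x : Vh => π x = u ∧ x ∉ A)).card
        ≤ (Finset.univ.filter (fun x : Vh => π x = u ∧ x ∈ A)).card)
    (hT : ∀ u : V, u ∈ T ↔
      ¬ (Finset.univ.filter (fun x : Vh => π x = u ∧ x ∉ A)).card
        ≤ (Finset.univ.filter (fun x : Vh => π x = u ∧ x ∈ A)).card)
    (hport : ∀ x : Vh, (Finset.univ.filter (fun y : Vh => Gh.Adj x y ∧ π y ≠ π x)).card = 1)
    (hsurj : ∀ u v : V, G.Adj u v → ∃ x y : Vh, Gh.Adj x y ∧ π x = u ∧ π y = v)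
    (hexp : ∀ u : V,
      ψ₀ * min ((Finset.univ.filter (fun x : Vh => π x = u ∧ x ∈ A)).card : ℝ)
               ((Finset.univ.filter (fun x : Vh => π x = u ∧ x ∉ A)).card : ℝ)
        ≤ ((Gh.edgeFinset.filter (fun e => ∃ x y : Vh, e = s(x, y) ∧
              π x = u ∧ π y = u ∧ x ∈ A ∧ y ∉ A)).card : ℝ)) :
    ((cutE G S T).card : ℝ)
      ≤ (1 + 1 / ψ₀) * ((cutE Gh A (Finset.univ \ A)).card : ℝ) := by
  classical
  set P : V → Prop := fun u =>
    (Finset.univ.filter (fun x : Vh => π x = u ∧ x ∉ A)).card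
      ≤ (Finset.univ.filter (fun x : Vh => π x = u ∧ x ∈ A)).card with hPdef
  set D := cutE Gh A (Finset.univ \ A) with hDdef
  set M := Finset.univ.filter (fun z : Vh => (z ∈ A ∧ ¬ P (π z)) ∨ (z ∉ A ∧ P (π z))) with hMdef
  have huniq : ∀ z x x' : Vh, Gh.Adj z x → Gh.Adj z x' → π x ≠ π z → π x' ≠ π z → x = x' := by
    intro z x x' h1 h2 h3 h4
    exact Finset.card_le_one.mp (le_of_eq (hport z)) x
      (Finset.mem_filter.mpr ⟨Finset.mem_univ _, h1, h3⟩) x'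
      (Finset.mem_filter.mpr ⟨Finset.mem_univ _, h2, h4⟩)
  have hQ : ∀ e ∈ cutE G S T, ∃ x y : Vh, Gh.Adj x y ∧ P (π x) ∧ ¬ P (π y) ∧ e = s(π x, π y) := by
    intro e he
    rw [mem_cutE] at he
    obtain ⟨heE, u, hu, v, hv, rfl⟩ := he
    have hcu : P u := (hS u).mp hu
    have hcv : ¬ P v := (hT v).mp hv
    have hadjuv : G.Adj u v := by
      rw [SimpleGraph.mem_edgeFinset, SimpleGraph.mem_edgeSet] at heE
      exact heE
    obtain ⟨x, y, hxy, hx, hy⟩ := hsurj u v hadjuv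
    exact ⟨x, y, hxy, hx ▸ hcu, hy ▸ hcv, by rw [hx, hy]⟩
  choose f₁ f₂ hf1 hf2 hf3 hf4 using hQ
  set g : Sym2 V → Sym2 V ⊕ (Sym2 Vh ⊕ Vh) := fun e =>
    if h : e ∈ cutE G S T then
      (if f₁ e h ∈ A then
        (if f₂ e h ∈ A then Sum.inr (Sum.inr (f₂ e h))
         else Sum.inr (Sum.inl s(f₁ e h, f₂ e h)))
       else
        (if f₂ e h ∈ A then Sum.inr (Sum.inl s(f₁ e h, f₂ e h))
         else Sum.inr (Sum.inr (f₁ e h))))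
    else Sum.inl e with hgdef
  have hg : ∀ (e : Sym2 V) (h : e ∈ cutE G S T),
      g e = (if f₁ e h ∈ A then
        (if f₂ e h ∈ A then Sum.inr (Sum.inr (f₂ e h))
         else Sum.inr (Sum.inl s(f₁ e h, f₂ e h)))
       else
        (if f₂ e h ∈ A then Sum.inr (Sum.inl s(f₁ e h, f₂ e h))
         else Sum.inr (Sum.inr (f₁ e h)))) := by
    intro e h
    rw [hgdef]
    exact dif_pos h
  have hmaps : ∀ e ∈ cutE G S T,
      g e ∈ (D.image (fun d => Sum.inr (Sum.inl d)) ∪ M.image (fun z => Sum.inr (Sum.inr z))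
        : Finset (Sym2 V ⊕ (Sym2 Vh ⊕ Vh))) := by
    intro e he
    rw [hg e he]
    by_cases hx : f₁ e he ∈ A <;> by_cases hy : f₂ e he ∈ A <;>
      simp only [hx, hy, if_true, if_false, ite_true, ite_false]
    · exact Finset.mem_union_right _ (Finset.mem_image_of_mem _
        (Finset.mem_filter.mpr ⟨Finset.mem_univ _, Or.inl ⟨hy, hf3 e he⟩⟩))
    · refine Finset.mem_union_left _ (Finset.mem_image_of_mem _ ?_)
      rw [hDdef, mem_cutE]
      exact ⟨SimpleGraph.mem_edgeFinset.mpr (hf1 e he), f₁ e he, hx, f₂ e he,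
        Finset.mem_sdiff.mpr ⟨Finset.mem_univ _, hy⟩, rfl⟩
    · refine Finset.mem_union_left _ (Finset.mem_image_of_mem _ ?_)
      rw [hDdef, mem_cutE]
      exact ⟨SimpleGraph.mem_edgeFinset.mpr (hf1 e he), f₂ e he, hy, f₁ e he,
        Finset.mem_sdiff.mpr ⟨Finset.mem_univ _, hx⟩, Sym2.eq_swap⟩
    · exact Finset.mem_union_right _ (Finset.mem_image_of_mem _
        (Finset.mem_filter.mpr ⟨Finset.mem_univ _, Or.inr ⟨hx, hf2 e he⟩⟩))
  have hinjOn : Set.InjOn g (cutE G S T) := by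
    intro e₁ he₁' e₂ he₂' heq
    have he₁ : e₁ ∈ cutE G S T := he₁'
    have he₂ : e₂ ∈ cutE G S T := he₂'
    rw [hg e₁ he₁, hg e₂ he₂] at heq
    have hne₁ : π (f₂ e₁ he₁) ≠ π (f₁ e₁ he₁) :=
      fun h => hf3 e₁ he₁ (by rw [h]; exact hf2 e₁ he₁)
    have hne₂ : π (f₂ e₂ he₂) ≠ π (f₁ e₂ he₂) :=
      fun h => hf3 e₂ he₂ (by rw [h]; exact hf2 e₂ he₂)
    by_cases h1 : f₁ e₁ he₁ ∈ A <;> by_cases h2 : f₂ e₁ he₁ ∈ A <;>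
      by_cases h3 : f₁ e₂ he₂ ∈ A <;> by_cases h4 : f₂ e₂ he₂ ∈ A <;>
      simp only [h1, h2, h3, h4, if_true, if_false, ite_true, ite_false,
        Sum.inr.injEq, Sum.inl.injEq] at heq <;>
      first
      | (exact (Sym2.eq_iff.mp heq).elim
          (fun h => by rw [hf4 e₁ he₁, hf4 e₂ he₂, h.1, h.2])
          (fun h => absurd (hf2 e₁ he₁) (by rw [h.1]; exact hf3 e₂ he₂)))
      | (have hx : f₁ e₁ he₁ = f₁ e₂ he₂ := by
          refine huniq (f₂ e₁ he₁) _ _ (hf1 e₁ he₁).symm ?_ hne₁.symm ?_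
          · rw [heq]; exact (hf1 e₂ he₂).symm
          · rw [heq]; exact hne₂.symm
         rw [hf4 e₁ he₁, hf4 e₂ he₂, hx, heq])
      | (have hy : f₂ e₁ he₁ = f₂ e₂ he₂ := by
          refine huniq (f₁ e₁ he₁) _ _ (hf1 e₁ he₁) ?_ hne₁ ?_
          · rw [heq]; exact hf1 e₂ he₂
          · rw [heq]; exact hne₂
         rw [hf4 e₁ he₁, hf4 e₂ he₂, heq, hy])
      | (exact absurd h2 (by rw [heq]; exact h3))
      | (exact absurd h4 (by rw [← heq]; exact h1))
      | simp at heq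
  have hC1 : (cutE G S T).card ≤ D.card + M.card := by
    have h2 := Finset.card_le_card_of_injOn g hmaps hinjOn
    have h3 := Finset.card_union_le
      (D.image (fun d => Sum.inr (Sum.inl d) : Sym2 Vh → Sym2 V ⊕ (Sym2 Vh ⊕ Vh)))
      (M.image (fun z => Sum.inr (Sum.inr z)))
    have h4 := Finset.card_image_le (s := D)
      (f := (fun d => Sum.inr (Sum.inl d) : Sym2 Vh → Sym2 V ⊕ (Sym2 Vh ⊕ Vh)))
    have h5 := Finset.card_image_le (s := M)
      (f := (fun z => Sum.inr (Sum.inr z) : Vh → Sym2 V ⊕ (Sym2 Vh ⊕ Vh)))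
    omega
  have hfib2 : ∀ u : V, ψ₀ * ((M.filter (fun z => π z = u)).card : ℝ)
      ≤ ((Gh.edgeFinset.filter (fun e => ∃ x y : Vh, e = s(x, y) ∧
            π x = u ∧ π y = u ∧ x ∈ A ∧ y ∉ A)).card : ℝ) := by
    intro u
    by_cases hu : P u
    · have hfe : M.filter (fun z => π z = u)
          = Finset.univ.filter (fun x : Vh => π x = u ∧ x ∉ A) := by
        ext z
        simp only [hMdef, Finset.mem_filter, Finset.mem_univ, true_and]
        constructor
        · rintro ⟨hz, rfl⟩
          rcases hz with ⟨_, hnc⟩ | ⟨hzA, _⟩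
          · exact absurd hu hnc
          · exact ⟨rfl, hzA⟩
        · rintro ⟨rfl, hzA⟩
          exact ⟨Or.inr ⟨hzA, hu⟩, rfl⟩
      have hmin : min ((Finset.univ.filter (fun x : Vh => π x = u ∧ x ∈ A)).card : ℝ)
          ((Finset.univ.filter (fun x : Vh => π x = u ∧ x ∉ A)).card : ℝ)
          = ((Finset.univ.filter (fun x : Vh => π x = u ∧ x ∉ A)).card : ℝ) :=
        min_eq_right (by exact_mod_cast hu)
      rw [hfe]
      calc ψ₀ * ((Finset.univ.filter (fun x : Vh => π x = u ∧ x ∉ A)).card : ℝ)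
          = ψ₀ * min ((Finset.univ.filter (fun x : Vh => π x = u ∧ x ∈ A)).card : ℝ)
              ((Finset.univ.filter (fun x : Vh => π x = u ∧ x ∉ A)).card : ℝ) := by rw [hmin]
        _ ≤ _ := hexp u
    · have hfe : M.filter (fun z => π z = u)
          = Finset.univ.filter (fun x : Vh => π x = u ∧ x ∈ A) := by
        ext z
        simp only [hMdef, Finset.mem_filter, Finset.mem_univ, true_and]
        constructor
        · rintro ⟨hz, rfl⟩
          rcases hz with ⟨hzA, _⟩ | ⟨_, hc⟩
          · exact ⟨rfl, hzA⟩
          · exact absurd hc hu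
        · rintro ⟨rfl, hzA⟩
          exact ⟨Or.inl ⟨hzA, hu⟩, rfl⟩
      have hlt : ((Finset.univ.filter (fun x : Vh => π x = u ∧ x ∈ A)).card : ℝ)
          ≤ ((Finset.univ.filter (fun x : Vh => π x = u ∧ x ∉ A)).card : ℝ) := by
        have := lt_of_not_ge (hu : ¬ _)
        exact_mod_cast this.le
      have hmin : min ((Finset.univ.filter (fun x : Vh => π x = u ∧ x ∈ A)).card : ℝ)
          ((Finset.univ.filter (fun x : Vh => π x = u ∧ x ∉ A)).card : ℝ)
          = ((Finset.univ.filter (fun x : Vh => π x = u ∧ x ∈ A)).card : ℝ) :=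
        min_eq_left hlt
      rw [hfe]
      calc ψ₀ * ((Finset.univ.filter (fun x : Vh => π x = u ∧ x ∈ A)).card : ℝ)
          = ψ₀ * min ((Finset.univ.filter (fun x : Vh => π x = u ∧ x ∈ A)).card : ℝ)
              ((Finset.univ.filter (fun x : Vh => π x = u ∧ x ∉ A)).card : ℝ) := by rw [hmin]
        _ ≤ _ := hexp u
  have hdisj : ∀ u ∈ (Finset.univ : Finset V), ∀ v ∈ Finset.univ, u ≠ v →
      Disjoint (Gh.edgeFinset.filter (fun e => ∃ x y : Vh, e = s(x, y) ∧
          π x = u ∧ π y = u ∧ x ∈ A ∧ y ∉ A))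
        (Gh.edgeFinset.filter (fun e => ∃ x y : Vh, e = s(x, y) ∧
          π x = v ∧ π y = v ∧ x ∈ A ∧ y ∉ A)) := by
    intro u _ v _ huv
    rw [Finset.disjoint_left]
    intro e heu hev
    rw [Finset.mem_filter] at heu hev
    obtain ⟨_, x, y, rfl, hxu, hyu, _, _⟩ := heu
    obtain ⟨_, x', y', hee, hxv, hyv, _, _⟩ := hev
    rcases Sym2.eq_iff.mp hee with ⟨h1, _⟩ | ⟨h1, _⟩
    · exact huv (by rw [← hxu, h1, hxv])
    · exact huv (by rw [← hxu, h1, hyv])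
  have hsub : Finset.univ.biUnion (fun u => Gh.edgeFinset.filter (fun e => ∃ x y : Vh,
      e = s(x, y) ∧ π x = u ∧ π y = u ∧ x ∈ A ∧ y ∉ A)) ⊆ D := by
    intro e he
    rw [Finset.mem_biUnion] at he
    obtain ⟨u, _, he⟩ := he
    rw [Finset.mem_filter] at he
    obtain ⟨heE, x, y, rfl, _, _, hxA, hyA⟩ := he
    rw [hDdef, mem_cutE]
    exact ⟨heE, x, hxA, y, Finset.mem_sdiff.mpr ⟨Finset.mem_univ y, hyA⟩, rfl⟩
  have hsum : ∑ u : V, (Gh.edgeFinset.filter (fun e => ∃ x y : Vh, e = s(x, y) ∧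
      π x = u ∧ π y = u ∧ x ∈ A ∧ y ∉ A)).card ≤ D.card := by
    rw [← Finset.card_biUnion hdisj]
    exact Finset.card_le_card hsub
  have hfib : M.card = ∑ u : V, (M.filter (fun z => π z = u)).card :=
    Finset.card_eq_sum_card_fiberwise (fun z _ => Finset.mem_univ (π z))
  have hC2 : ψ₀ * (M.card : ℝ) ≤ (D.card : ℝ) := by
    calc ψ₀ * (M.card : ℝ)
        = ∑ u : V, ψ₀ * ((M.filter (fun z => π z = u)).card : ℝ) := by
          rw [← Finset.mul_sum, hfib]
          push_cast
          ring
      _ ≤ ∑ u : V, ((Gh.edgeFinset.filter (fun e => ∃ x y : Vh, e = s(x, y) ∧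
            π x = u ∧ π y = u ∧ x ∈ A ∧ y ∉ A)).card : ℝ) :=
          Finset.sum_le_sum (fun u _ => hfib2 u)
      _ ≤ (D.card : ℝ) := by exact_mod_cast hsum
  have hC1' : ((cutE G S T).card : ℝ) ≤ (D.card : ℝ) + (M.card : ℝ) := by exact_mod_cast hC1
  have hM : (M.card : ℝ) ≤ (D.card : ℝ) / ψ₀ := by
    rw [le_div_iff₀ hψ₀, mul_comm]
    exact hC2
  have hexpand : (1 + 1 / ψ₀) * ((D.card : ℝ)) = (D.card : ℝ) + (D.card : ℝ) / ψ₀ := by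
    field_simp
  rw [hDdef] at hC1' hM hexpand ⊢
  linarith

/-- In the degree-reduction construction (`Ĝ` on `V̂`, clouds
`X_u = π⁻¹(u)` internally wired as `ψ₀`-expanders, and exactly one external
edge per port), for any `A ⊆ V(Ĝ)` and the majority rounding
`S = {u : |X_u ∩ A| ≥ |X_u \ A|}`, we have
`|E_G(S, V∖S)| ≤ (1 + 1/ψ₀)·|E_Ĝ(A, Ā)|`. -/
theorem stmt11 {V Vh : Type*} [Fintype V] [Fintype Vh] [DecidableEq V] [DecidableEq Vh]
    (G : SimpleGraph V) (Gh : SimpleGraph Vh) (π : Vh → V) (ψ₀ : ℝ) (hψ₀ : 0 < ψ₀)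
    (A : Finset Vh)
    -- each cloud has exactly `deg_G(u)` ports
    (hdeg : ∀ u : V, (Finset.univ.filter (fun x : Vh => π x = u)).card = G.degree u)
    -- each port is incident to exactly one external edge
    (hport : ∀ x : Vh, (Finset.univ.filter (fun y : Vh => Gh.Adj x y ∧ π y ≠ π x)).card = 1)
    -- external edges of `Ĝ` project to edges of `G`, bijectively
    (hadj : ∀ x y : Vh, Gh.Adj x y → π x ≠ π y → G.Adj (π x) (π y))
    (hinj : ∀ x y x' y' : Vh, Gh.Adj x y → Gh.Adj x' y' → π x ≠ π y →
      π x = π x' → π y = π y' → x = x' ∧ y = y')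
    (hsurj : ∀ u v : V, G.Adj u v → ∃ x y : Vh, Gh.Adj x y ∧ π x = u ∧ π y = v)
    -- the internal expander of each cloud contributes `ψ₀·min(|X_u∩A|,|X_u∖A|)`
    -- edges to the cut `(A, Ā)`
    (hexp : ∀ u : V,
      ψ₀ * min ((Finset.univ.filter (fun x : Vh => π x = u ∧ x ∈ A)).card : ℝ)
               ((Finset.univ.filter (fun x : Vh => π x = u ∧ x ∉ A)).card : ℝ)
        ≤ ((Gh.edgeFinset.filter (fun e => ∃ x y : Vh, e = s(x, y) ∧
              π x = u ∧ π y = u ∧ x ∈ A ∧ y ∉ A)).card : ℝ)) :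
    ((cutE G (Finset.univ.filter (fun u : V =>
          (Finset.univ.filter (fun x : Vh => π x = u ∧ x ∉ A)).card
            ≤ (Finset.univ.filter (fun x : Vh => π x = u ∧ x ∈ A)).card))
        (Finset.univ.filter (fun u : V =>
          ¬ (Finset.univ.filter (fun x : Vh => π x = u ∧ x ∉ A)).card
            ≤ (Finset.univ.filter (fun x : Vh => π x = u ∧ x ∈ A)).card))).card : ℝ)
      ≤ (1 + 1 / ψ₀) * ((cutE Gh A (Finset.univ \ A)).card : ℝ) := by
  exact aux11 G Gh π ψ₀ hψ₀ A _ _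
    (fun u => ⟨fun h => (Finset.mem_filter.mp h).2,
      fun h => Finset.mem_filter.mpr ⟨Finset.mem_univ _, h⟩⟩)
    (fun u => ⟨fun h => (Finset.mem_filter.mp h).2,
      fun h => Finset.mem_filter.mpr ⟨Finset.mem_univ _, h⟩⟩)
    hport hsurj hexp
end

section
/- In the degree-reduction construction, if A ⊆ V(Ĝ) satisfies Ψ_{Ĝ}(A) ≤ ψ₀/2 (i.e., |E_{Ĝ}(A,Ā)| ≤ (ψ₀/2)·min(|A|,|Ā|)), and S = {u ∈ V : |X_u ∩ A| ≥ |X_u \ A|}, then vol_G(S) ≥ |A|/2 and vol_G(V\S) ≥ |Ā|/2. -/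
open Finset
open scoped Classical

set_option maxHeartbeats 1000000

/-- In the degree-reduction construction, if
`Ψ_Ĝ(A) ≤ ψ₀/2`, i.e. `|E_Ĝ(A,Ā)| ≤ (ψ₀/2)·min(|A|,|Ā|)`, and
`S = {u : |X_u ∩ A| ≥ |X_u ∖ A|}` is the majority rounding, then
`vol_G(S) ≥ |A|/2` and `vol_G(V∖S) ≥ |Ā|/2`, where
`vol_G(S) = Σ_{u∈S}|X_u| = |X_S|`. -/
theorem stmt12 {V Vh : Type*} [Fintype V] [Fintype Vh] [DecidableEq V] [DecidableEq Vh]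
    (G : SimpleGraph V) (Gh : SimpleGraph Vh) (π : Vh → V) (ψ₀ : ℝ) (hψ₀ : 0 < ψ₀)
    (A : Finset Vh)
    -- each cloud has exactly `deg_G(u)` ports
    (hdeg : ∀ u : V, (Finset.univ.filter (fun x : Vh => π x = u)).card = G.degree u)
    -- the internal expander of each cloud contributes `ψ₀·min(|X_u∩A|,|X_u∖A|)`
    -- edges to the cut `(A, Ā)`
    (hexp : ∀ u : V,
      ψ₀ * min ((Finset.univ.filter (fun x : Vh => π x = u ∧ x ∈ A)).card : ℝ)
               ((Finset.univ.filter (fun x : Vh => π x = u ∧ x ∉ A)).card : ℝ)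
        ≤ ((Gh.edgeFinset.filter (fun e => ∃ x y : Vh, e = s(x, y) ∧
              π x = u ∧ π y = u ∧ x ∈ A ∧ y ∉ A)).card : ℝ))
    -- `A` is a `(ψ₀/2)`-sparse cut of `Ĝ`
    (hsparse : ((cutE Gh A (Finset.univ \ A)).card : ℝ)
      ≤ ψ₀ / 2 * min (A.card : ℝ) (((Finset.univ \ A).card : ℝ))) :
    (A.card : ℝ) / 2
        ≤ ((Finset.univ.filter (fun x : Vh =>
            (Finset.univ.filter (fun y : Vh => π y = π x ∧ y ∉ A)).card
              ≤ (Finset.univ.filter (fun y : Vh => π y = π x ∧ y ∈ A)).card)).card : ℝ) ∧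
    (((Finset.univ \ A).card : ℝ)) / 2
        ≤ ((Finset.univ.filter (fun x : Vh =>
            ¬ (Finset.univ.filter (fun y : Vh => π y = π x ∧ y ∉ A)).card
              ≤ (Finset.univ.filter (fun y : Vh => π y = π x ∧ y ∈ A)).card)).card : ℝ) := by
  classical
  let a : V → ℕ := fun u => (Finset.univ.filter (fun x : Vh => π x = u ∧ x ∈ A)).card
  let b : V → ℕ := fun u => (Finset.univ.filter (fun x : Vh => π x = u ∧ x ∉ A)).card
  let E : V → Finset (Sym2 Vh) := fun u => Gh.edgeFinset.filter (fun e => ∃ x y : Vh, e = s(x, y) ∧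
              π x = u ∧ π y = u ∧ x ∈ A ∧ y ∉ A)
  let c : V → ℕ := fun u => (E u).card
  have hexp' : ∀ u, ψ₀ * min ((a u : ℝ)) ((b u : ℝ)) ≤ (c u : ℝ) := hexp
  have hA : A.card = ∑ u, a u := by
    rw [Finset.card_eq_sum_card_fiberwise (f := π) (t := Finset.univ)
      (fun x _ => Finset.mem_univ (π x))]
    refine Finset.sum_congr rfl fun u _ => ?_
    congr 1
    ext x
    simp [and_comm]
  have hAc : (Finset.univ \ A).card = ∑ u, b u := by
    rw [Finset.card_eq_sum_card_fiberwise (f := π) (t := Finset.univ)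
      (fun x _ => Finset.mem_univ (π x))]
    refine Finset.sum_congr rfl fun u _ => ?_
    congr 1
    ext x
    simp [and_comm]
  have hfib : ∀ u, (Finset.univ.filter (fun x : Vh => π x = u)).card = a u + b u := by
    intro u
    have h := Finset.card_filter_add_card_filter_not
      (s := Finset.univ.filter (fun x : Vh => π x = u)) (p := fun x => x ∈ A)
    rw [Finset.filter_filter, Finset.filter_filter] at h
    exact h.symm
  let S : Finset V := Finset.univ.filter (fun u => b u ≤ a u)
  have hSmem : ∀ u, u ∈ S ↔ b u ≤ a u := fun u => by simp [S]
  have hT : (Finset.univ.filter (fun x : Vh => b (π x) ≤ a (π x))).card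
      = ∑ u ∈ S, (a u + b u) := by
    have he : (Finset.univ.filter (fun x : Vh => b (π x) ≤ a (π x)))
        = S.biUnion (fun u => Finset.univ.filter (fun x : Vh => π x = u)) := by
      ext x
      simp only [Finset.mem_filter, Finset.mem_univ, true_and, Finset.mem_biUnion]
      constructor
      · intro h; exact ⟨π x, (hSmem _).2 h, rfl⟩
      · rintro ⟨u, hu, rfl⟩; exact (hSmem _).1 hu
    rw [he, Finset.card_biUnion]
    · exact Finset.sum_congr rfl fun u _ => hfib u
    · intro u _ v _ huv
      refine Finset.disjoint_left.2 fun x hx hx' => huv ?_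
      rw [← (Finset.mem_filter.1 hx).2, (Finset.mem_filter.1 hx').2]
  have hT' : (Finset.univ.filter (fun x : Vh => ¬ b (π x) ≤ a (π x))).card
      = ∑ u ∈ Finset.univ \ S, (a u + b u) := by
    have he : (Finset.univ.filter (fun x : Vh => ¬ b (π x) ≤ a (π x)))
        = (Finset.univ \ S).biUnion (fun u => Finset.univ.filter (fun x : Vh => π x = u)) := by
      ext x
      simp only [Finset.mem_filter, Finset.mem_univ, true_and, Finset.mem_biUnion,
        Finset.mem_sdiff]
      constructor
      · intro h
        exact ⟨π x, fun hc => h ((hSmem _).1 hc), rfl⟩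
      · rintro ⟨u, hu, rfl⟩
        exact fun h => hu ((hSmem _).2 h)
    rw [he, Finset.card_biUnion]
    · exact Finset.sum_congr rfl fun u _ => hfib u
    · intro u _ v _ huv
      refine Finset.disjoint_left.2 fun x hx hx' => huv ?_
      rw [← (Finset.mem_filter.1 hx).2, (Finset.mem_filter.1 hx').2]
  have hcut : ∑ u, c u ≤ (cutE Gh A (Finset.univ \ A)).card := by
    have hdisjE : ∀ u ∈ Finset.univ, ∀ v ∈ Finset.univ, u ≠ v → Disjoint (E u) (E v) := by
      intro u _ v _ huv
      refine Finset.disjoint_left.2 fun e he he' => huv ?_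
      obtain ⟨-, x, y, rfl, hxu, hyu, -, -⟩ := Finset.mem_filter.1 he
      obtain ⟨-, x', y', hexy, hxv, hyv, -, -⟩ := Finset.mem_filter.1 he'
      rw [Sym2.eq_iff] at hexy
      rcases hexy with ⟨rfl, rfl⟩ | ⟨rfl, rfl⟩
      · rw [← hxu, hxv]
      · rw [← hxu, hyv]
    calc ∑ u, c u = (Finset.univ.biUnion E).card := (Finset.card_biUnion hdisjE).symm
    _ ≤ (cutE Gh A (Finset.univ \ A)).card := by
        apply Finset.card_le_card
        intro e he
        obtain ⟨u, -, he⟩ := Finset.mem_biUnion.1 he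
        obtain ⟨heG, x, y, rfl, -, -, hxA, hyA⟩ := Finset.mem_filter.1 he
        simp only [cutE, Finset.mem_filter]
        exact ⟨heG, x, hxA, y, Finset.mem_sdiff.2 ⟨Finset.mem_univ _, hyA⟩, rfl⟩
  have hM : (∑ u, (min (a u) (b u) : ℝ))
      ≤ min (A.card : ℝ) (((Finset.univ \ A).card : ℝ)) / 2 := by
    have h1 : ψ₀ * ∑ u, (min (a u) (b u) : ℝ) ≤ ∑ u, (c u : ℝ) := by
      rw [Finset.mul_sum]
      exact Finset.sum_le_sum fun u _ => by
        have h := hexp' u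
        push_cast at h ⊢
        linarith
    have h2 : (∑ u, (c u : ℝ)) ≤ ((cutE Gh A (Finset.univ \ A)).card : ℝ) := by
      rw [← Nat.cast_sum]; exact_mod_cast hcut
    have h3 := h1.trans (h2.trans hsparse)
    nlinarith [h3, hψ₀]
  have hAs : (A.card : ℝ) = ∑ u ∈ S, (a u : ℝ) + ∑ u ∈ Finset.univ \ S, (a u : ℝ) := by
    rw [hA]
    push_cast
    rw [← Finset.sum_sdiff (Finset.subset_univ S) (f := fun u => (a u : ℝ))]
    ring
  have hAcs : ((Finset.univ \ A).card : ℝ)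
      = ∑ u ∈ S, (b u : ℝ) + ∑ u ∈ Finset.univ \ S, (b u : ℝ) := by
    rw [hAc]
    push_cast
    rw [← Finset.sum_sdiff (Finset.subset_univ S) (f := fun u => (b u : ℝ))]
    ring
  have hmin_nonneg : ∀ u ∈ Finset.univ, u ∉ (Finset.univ \ S) → (0:ℝ) ≤ (min (a u) (b u) : ℝ) :=
    fun u _ _ => by positivity
  have hminA : ∑ u ∈ Finset.univ \ S, (a u : ℝ) ≤ ∑ u, (min (a u) (b u) : ℝ) := by
    have he : ∑ u ∈ Finset.univ \ S, (a u : ℝ)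
        = ∑ u ∈ Finset.univ \ S, (min (a u) (b u) : ℝ) := by
      refine Finset.sum_congr rfl fun u hu => ?_
      have hu' : ¬ b u ≤ a u := by
        exact fun hc => (Finset.mem_sdiff.1 hu).2 ((hSmem _).2 hc)
      have hab : (a u : ℝ) ≤ (b u : ℝ) := by exact_mod_cast le_of_lt (lt_of_not_ge hu')
      exact (min_eq_left hab).symm
    rw [he]
    exact Finset.sum_le_sum_of_subset_of_nonneg (Finset.sdiff_subset) hmin_nonneg
  have hminB : ∑ u ∈ S, (b u : ℝ) ≤ ∑ u, (min (a u) (b u) : ℝ) := by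
    have he : ∑ u ∈ S, (b u : ℝ) = ∑ u ∈ S, (min (a u) (b u) : ℝ) := by
      refine Finset.sum_congr rfl fun u hu => ?_
      have hu' : b u ≤ a u := (hSmem _).1 hu
      have hba : (b u : ℝ) ≤ (a u : ℝ) := by exact_mod_cast hu'
      exact (min_eq_right hba).symm
    rw [he]
    exact Finset.sum_le_sum_of_subset_of_nonneg (Finset.subset_univ S)
      (fun u _ _ => by positivity)
  have hmin1 : min (A.card : ℝ) (((Finset.univ \ A).card : ℝ)) ≤ (A.card : ℝ) := min_le_left _ _
  have hmin2 : min (A.card : ℝ) (((Finset.univ \ A).card : ℝ)) ≤ ((Finset.univ \ A).card : ℝ) :=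
    min_le_right _ _
  have hTc : ((Finset.univ.filter (fun x : Vh => b (π x) ≤ a (π x))).card : ℝ)
      = ∑ u ∈ S, ((a u : ℝ) + (b u : ℝ)) := by
    rw [hT]; push_cast; ring
  have hTc' : ((Finset.univ.filter (fun x : Vh => ¬ b (π x) ≤ a (π x))).card : ℝ)
      = ∑ u ∈ Finset.univ \ S, ((a u : ℝ) + (b u : ℝ)) := by
    rw [hT']; push_cast; ring
  have hbnonneg : (0:ℝ) ≤ ∑ u ∈ S, (b u : ℝ) := Finset.sum_nonneg fun u _ => by positivity
  have hanonneg : (0:ℝ) ≤ ∑ u ∈ Finset.univ \ S, (a u : ℝ) :=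
    Finset.sum_nonneg fun u _ => by positivity
  constructor
  · show (A.card : ℝ) / 2 ≤ ((Finset.univ.filter (fun x : Vh => b (π x) ≤ a (π x))).card : ℝ)
    rw [hTc, Finset.sum_add_distrib]
    linarith
  · show ((Finset.univ \ A).card : ℝ) / 2
      ≤ ((Finset.univ.filter (fun x : Vh => ¬ b (π x) ≤ a (π x))).card : ℝ)
    rw [hTc', Finset.sum_add_distrib]
    linarith
end

section
/- Let H be the random multigraph on n vertices where each vertex v adds k = 80·⌈log n⌉ edges to independently and uniformly random vertices. Then with probability at least 1 − 1/n, for every S ⊆ V with 1 ≤ |S| ≤ n/2, the number of edges with exactly one endpoint in S is at least (k/4)·|S|; i.e., H is an Ω(log n)-expander. -/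
open Finset
open scoped Classical

lemma aux_numeric : (3:ℝ)^80 / 2^140 ≤ Real.exp (-9) := by
  have h9 : Real.exp 9 = Real.exp 1 ^ 9 := by
    rw [← Real.exp_nat_mul]; norm_num
  have he : Real.exp 1 ^ 9 ≤ 2.7182818286 ^ 9 :=
    pow_le_pow_left₀ (Real.exp_pos 1).le Real.exp_one_lt_d9.le 9
  have key : (3:ℝ)^80 * Real.exp 9 ≤ 2^140 := by
    calc (3:ℝ)^80 * Real.exp 9 ≤ 3^80 * 2.7182818286^9 := by
          rw [h9]; exact mul_le_mul_of_nonneg_left he (by positivity)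
      _ ≤ 2^140 := by norm_num
  rw [Real.exp_neg, div_le_iff₀ (by positivity), inv_mul_eq_div,
    le_div_iff₀ (Real.exp_pos 9)]
  linarith


lemma aux_sum_bound (n k : ℕ) (S : Finset (Fin n)) (hS2 : 2 * S.card ≤ n) :
    ∑ f : Fin n × Fin k → Fin n,
      ((1:ℝ)/2) ^ (Finset.univ.filter
        (fun p : Fin n × Fin k => (p.1 ∈ S) ≠ (f p ∈ S))).card
      ≤ ((3:ℝ)/4) ^ (k * S.card) * (n:ℝ) ^ (n * k) := by
  have hα : S.card ≤ n := by
    simpa using Finset.card_le_card (Finset.subset_univ S)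
  have hrw : ∀ f : Fin n × Fin k → Fin n,
      ((1:ℝ)/2) ^ (Finset.univ.filter
        (fun p : Fin n × Fin k => (p.1 ∈ S) ≠ (f p ∈ S))).card
      = ∏ p : Fin n × Fin k,
          (if (p.1 ∈ S) ≠ (f p ∈ S) then ((1:ℝ)/2) else 1) := by
    intro f
    rw [Finset.prod_ite, Finset.prod_const, Finset.prod_const, one_pow, mul_one]
  simp_rw [hrw]
  have hswap : ∑ f : Fin n × Fin k → Fin n, ∏ p : Fin n × Fin k,
      (if (p.1 ∈ S) ≠ (f p ∈ S) then ((1:ℝ)/2) else 1)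
      = ∏ p : Fin n × Fin k, ∑ v : Fin n,
          (if (p.1 ∈ S) ≠ (v ∈ S) then ((1:ℝ)/2) else 1) := by
    rw [Finset.prod_univ_sum (fun _ => (univ : Finset (Fin n)))]
    rw [Fintype.piFinset_univ]
  rw [hswap]
  have hfac : ∀ p : Fin n × Fin k,
      (∑ v : Fin n, (if (p.1 ∈ S) ≠ (v ∈ S) then ((1:ℝ)/2) else 1))
      ≤ (if p.1 ∈ S then ((3:ℝ)/4) * n else (n:ℝ)) := by
    intro p
    by_cases h : p.1 ∈ S
    · rw [if_pos h]
      have hcong : (∑ v : Fin n, if (p.1 ∈ S) ≠ (v ∈ S) then ((1:ℝ)/2) else 1)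
          = ∑ v : Fin n, if v ∉ S then ((1:ℝ)/2) else 1 :=
        Finset.sum_congr rfl (fun v _ => if_congr (by simp [h, eq_iff_iff]) rfl rfl)
      rw [hcong, Finset.sum_ite, Finset.sum_const, Finset.sum_const]
      have h1 : (univ.filter (fun v : Fin n => v ∉ S)).card = n - S.card := by
        rw [Finset.filter_not, Finset.filter_mem_eq_inter, Finset.univ_inter,
          Finset.card_sdiff_of_subset (Finset.subset_univ S)]
        simp
      have h2 : (univ.filter (fun v : Fin n => ¬ v ∉ S)).card = S.card := by
        simp [Finset.filter_not, Finset.filter_mem_eq_inter]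
      rw [h1, h2]
      simp only [nsmul_eq_mul, Nat.cast_sub hα, smul_eq_mul, mul_one]
      have hS2' : (S.card:ℝ) * 2 ≤ n := by exact_mod_cast (by omega : S.card * 2 ≤ n)
      nlinarith [Nat.cast_nonneg (α := ℝ) S.card]
    · rw [if_neg h]
      calc ∑ v : Fin n, (if (p.1 ∈ S) ≠ (v ∈ S) then ((1:ℝ)/2) else 1)
          ≤ ∑ _v : Fin n, (1:ℝ) := by
            apply Finset.sum_le_sum; intro v _
            split <;> norm_num
        _ = (n:ℝ) := by simp
  calc ∏ p : Fin n × Fin k, ∑ v : Fin n,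
        (if (p.1 ∈ S) ≠ (v ∈ S) then ((1:ℝ)/2) else 1)
      ≤ ∏ p : Fin n × Fin k, (if p.1 ∈ S then ((3:ℝ)/4) * n else (n:ℝ)) := by
        apply Finset.prod_le_prod
        · intro p _; positivity
        · intro p _; exact hfac p
    _ = (((3:ℝ)/4) * n) ^ ((univ.filter (fun p : Fin n × Fin k => p.1 ∈ S)).card)
        * (n:ℝ) ^ ((univ.filter (fun p : Fin n × Fin k => ¬ p.1 ∈ S)).card) := by
        rw [Finset.prod_ite, Finset.prod_const, Finset.prod_const]
    _ ≤ ((3:ℝ)/4) ^ (k * S.card) * (n:ℝ) ^ (n * k) := by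
        have hc1 : (univ.filter (fun p : Fin n × Fin k => p.1 ∈ S)).card = S.card * k := by
          have : (univ.filter (fun p : Fin n × Fin k => p.1 ∈ S)) = S ×ˢ univ := by
            ext p; simp [Finset.mem_product]
          rw [this, Finset.card_product, Finset.card_univ, Fintype.card_fin]
        have hc2 : (univ.filter (fun p : Fin n × Fin k => ¬ p.1 ∈ S)).card
            = n * k - S.card * k := by
          have h3 := Finset.card_filter_add_card_filter_not
            (s := (univ : Finset (Fin n × Fin k)))
            (p := fun p : Fin n × Fin k => p.1 ∈ S)
          rw [hc1] at h3
          have hcard : (univ : Finset (Fin n × Fin k)).card = n * k := by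
            simp [Fintype.card_prod]
          omega
        rw [hc1, hc2, mul_pow, mul_assoc, ← pow_add]
        have he : S.card * k + (n * k - S.card * k) = n * k :=
          Nat.add_sub_cancel' (Nat.mul_le_mul_right k hα)
        rw [he, mul_comm k S.card]

lemma aux_ratio : (2:ℝ)^20 * ((3:ℝ)/4)^80 = (3:ℝ)^80 / 2^140 := by
  rw [div_pow]
  rw [mul_div_assoc', div_eq_div_iff (by positivity) (by positivity)]
  norm_num


lemma aux_per_S (n k m : ℕ) (hk : k = 80 * m) (S : Finset (Fin n))
    (hS1 : 1 ≤ S.card) (hS2 : 2 * S.card ≤ n)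
    (hsum : ∑ f : Fin n × Fin k → Fin n,
      ((1:ℝ)/2) ^ (Finset.univ.filter
        (fun p : Fin n × Fin k => (p.1 ∈ S) ≠ (f p ∈ S))).card
      ≤ ((3:ℝ)/4) ^ (k * S.card) * (n:ℝ) ^ (n * k)) :
    ((univ.filter (fun f : Fin n × Fin k → Fin n =>
        ¬ k * S.card ≤ 4 * (Finset.univ.filter
          (fun p : Fin n × Fin k => (p.1 ∈ S) ≠ (f p ∈ S))).card)).card : ℝ)
      ≤ ((3:ℝ)^80 / 2^140) ^ (m * S.card) * (n:ℝ) ^ (n * k) := by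
  subst hk
  set k := 80 * m with hk
  set X : (Fin n × Fin k → Fin n) → ℕ := fun f =>
    (Finset.univ.filter (fun p : Fin n × Fin k => (p.1 ∈ S) ≠ (f p ∈ S))).card with hX
  have step1 : ((univ.filter (fun f : Fin n × Fin k → Fin n =>
        ¬ k * S.card ≤ 4 * X f)).card : ℝ)
      ≤ ∑ f : Fin n × Fin k → Fin n, (2:ℝ)^(20 * m * S.card) * ((1:ℝ)/2)^(X f) := by
    have hcast : ((univ.filter (fun f : Fin n × Fin k → Fin n =>
        ¬ k * S.card ≤ 4 * X f)).card : ℝ)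
        = ∑ f ∈ univ.filter (fun f : Fin n × Fin k → Fin n =>
            ¬ k * S.card ≤ 4 * X f), (1:ℝ) := by simp
    rw [hcast]
    have h1 : (∑ f ∈ univ.filter (fun f : Fin n × Fin k → Fin n =>
          ¬ k * S.card ≤ 4 * X f), (1:ℝ))
        ≤ ∑ f ∈ univ.filter (fun f : Fin n × Fin k → Fin n =>
          ¬ k * S.card ≤ 4 * X f), (2:ℝ)^(20 * m * S.card) * ((1:ℝ)/2)^(X f) := by
      apply Finset.sum_le_sum
      intro f hf
      rw [Finset.mem_filter] at hf
      have hle := hf.2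
      have hXf : X f ≤ 20 * m * S.card := by
        rw [hk] at hle
        have hlt : 4 * X f < 80 * m * S.card := Nat.lt_of_not_le (fun h => hle (by omega))
        have h4 : 80 * m * S.card = 4 * (20 * m * S.card) := by ring
        rw [h4] at hlt
        exact (Nat.lt_of_mul_lt_mul_left hlt).le
      have hpow : (2:ℝ)^(X f) ≤ (2:ℝ)^(20 * m * S.card) :=
        pow_le_pow_right₀ one_le_two hXf
      rw [one_div, inv_pow, ← div_eq_mul_inv, le_div_iff₀ (by positivity)]
      simpa using hpow
    refine h1.trans (Finset.sum_le_sum_of_subset_of_nonneg (Finset.filter_subset _ _) ?_)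
    intro f _ _; positivity
  have step2 : ∑ f : Fin n × Fin k → Fin n,
      (2:ℝ)^(20 * m * S.card) * ((1:ℝ)/2)^(X f)
      ≤ (2:ℝ)^(20 * m * S.card) * (((3:ℝ)/4) ^ (k * S.card) * (n:ℝ) ^ (n * k)) := by
    rw [← Finset.mul_sum]
    exact mul_le_mul_of_nonneg_left hsum (by positivity)
  have key : (2:ℝ)^(20 * m * S.card) * ((3:ℝ)/4) ^ (k * S.card)
      = ((3:ℝ)^80 / 2^140) ^ (m * S.card) := by
    rw [hk]
    have h80 : 80 * m * S.card = 80 * (m * S.card) := by ring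
    have h20 : 20 * m * S.card = 20 * (m * S.card) := by ring
    rw [h80, h20, pow_mul (2:ℝ) 20, pow_mul ((3:ℝ)/4) 80, ← mul_pow, aux_ratio]
  calc ((univ.filter (fun f : Fin n × Fin k → Fin n =>
        ¬ k * S.card ≤ 4 * X f)).card : ℝ)
      ≤ _ := step1
    _ ≤ (2:ℝ)^(20 * m * S.card) * (((3:ℝ)/4) ^ (k * S.card) * (n:ℝ) ^ (n * k)) := step2
    _ = ((3:ℝ)^80 / 2^140) ^ (m * S.card) * (n:ℝ) ^ (n * k) := by
        rw [← mul_assoc, key]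

/-- Build a random multigraph `H` on `n` vertices where each
vertex `v` adds `k = 80·⌈log n⌉` edges to independently uniform random
vertices, modelled by a uniformly random function `f : Fin n × Fin k → Fin n`.
With probability at least `1 − 1/n`, for every `S` with `1 ≤ |S| ≤ n/2`, the
number of sampled edges with exactly one endpoint in `S` is at least
`(k/4)·|S|`; i.e. `H` is an `Ω(log n)`-expander.  The fraction of bad outcomes
is at most `1/n`. -/
theorem stmt14 (n : ℕ) (hn : 2 ≤ n) (k : ℕ) (hk : k = 80 * ⌈Real.log n⌉₊) :
    ((Finset.univ.filter (fun f : Fin n × Fin k → Fin n =>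
        ¬ ∀ S : Finset (Fin n), 1 ≤ S.card → 2 * S.card ≤ n →
          k * S.card ≤ 4 * (Finset.univ.filter
            (fun p : Fin n × Fin k => (p.1 ∈ S) ≠ (f p ∈ S))).card)).card : ℝ)
      ≤ (1 / n) * (Fintype.card (Fin n × Fin k → Fin n)) := by
  have per_S : ∀ S : Finset (Fin n), 1 ≤ S.card → 2 * S.card ≤ n →
      ((univ.filter (fun f : Fin n × Fin k → Fin n =>
        ¬ k * S.card ≤ 4 * (Finset.univ.filter
          (fun p : Fin n × Fin k => (p.1 ∈ S) ≠ (f p ∈ S))).card)).card : ℝ)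
      ≤ ((3:ℝ)^80 / 2^140) ^ (⌈Real.log n⌉₊ * S.card) * (n:ℝ) ^ (n * k) :=
    fun S h1 h2 => aux_per_S n k ⌈Real.log n⌉₊ hk S h1 h2 (aux_sum_bound n k S h2)

  have hn0 : (0:ℝ) < n := by positivity
  have h1n : (1:ℝ) ≤ n := by exact_mod_cast (by omega : 1 ≤ n)
  have h2n : (2:ℝ) ≤ n := by exact_mod_cast hn
  set m := ⌈Real.log n⌉₊ with hm
  set d : ℝ := (3:ℝ)^80 / 2^140 with hd
  have hd_pos : (0:ℝ) < d := by rw [hd]; positivity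
  -- d^m ≤ n⁻⁹
  have hdm : d ^ m ≤ ((n:ℝ)^9)⁻¹ := by
    have hlog : Real.log n ≤ m := Nat.le_ceil _
    calc d ^ m ≤ (Real.exp (-9)) ^ m := pow_le_pow_left₀ hd_pos.le aux_numeric m
      _ = Real.exp ((m:ℝ) * (-9)) := (Real.exp_nat_mul _ m).symm
      _ ≤ Real.exp ((Real.log n) * (-9)) := Real.exp_le_exp.2 (by nlinarith)
      _ = ((n:ℝ)^9)⁻¹ := by
          rw [show (Real.log n) * (-9) = -(((9:ℕ):ℝ) * Real.log n) by push_cast; ring,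
            Real.exp_neg, Real.exp_nat_mul, Real.exp_log hn0]
  have hnd1 : (n:ℝ) * d ^ m ≤ 1 := by
    have h19 : (n:ℝ) ≤ (n:ℝ)^9 := le_self_pow₀ h1n (by norm_num)
    calc (n:ℝ) * d ^ m ≤ (n:ℝ) * ((n:ℝ)^9)⁻¹ :=
          mul_le_mul_of_nonneg_left hdm hn0.le
      _ ≤ 1 := by
          rw [mul_inv_le_iff₀ (by positivity)]
          simpa using h19
  -- the bad set and covering
  set 𝒮 : Finset (Finset (Fin n)) :=
    univ.filter (fun S : Finset (Fin n) => 1 ≤ S.card ∧ 2 * S.card ≤ n) with hS𝒮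
  set B : Finset (Fin n) → Finset (Fin n × Fin k → Fin n) := fun S =>
    univ.filter (fun f : Fin n × Fin k → Fin n =>
      ¬ k * S.card ≤ 4 * (Finset.univ.filter
        (fun p : Fin n × Fin k => (p.1 ∈ S) ≠ (f p ∈ S))).card) with hB
  have hsub : (Finset.univ.filter (fun f : Fin n × Fin k → Fin n =>
        ¬ ∀ S : Finset (Fin n), 1 ≤ S.card → 2 * S.card ≤ n →
          k * S.card ≤ 4 * (Finset.univ.filter
            (fun p : Fin n × Fin k => (p.1 ∈ S) ≠ (f p ∈ S))).card))
      ⊆ 𝒮.biUnion B := by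
    intro f hf
    rw [Finset.mem_filter] at hf
    have := hf.2
    push_neg at this
    obtain ⟨S, h1, h2, h3⟩ := this
    refine Finset.mem_biUnion.2 ⟨S, ?_, ?_⟩
    · rw [hS𝒮]; exact Finset.mem_filter.2 ⟨Finset.mem_univ _, h1, h2⟩
    · rw [hB]; exact Finset.mem_filter.2 ⟨Finset.mem_univ _, by omega⟩
  have hcount : ((Finset.univ.filter (fun f : Fin n × Fin k → Fin n =>
        ¬ ∀ S : Finset (Fin n), 1 ≤ S.card → 2 * S.card ≤ n →
          k * S.card ≤ 4 * (Finset.univ.filter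
            (fun p : Fin n × Fin k => (p.1 ∈ S) ≠ (f p ∈ S))).card)).card : ℝ)
      ≤ ∑ S ∈ 𝒮, ((B S).card : ℝ) := by
    have h := (Finset.card_le_card hsub).trans (Finset.card_biUnion_le)
    exact_mod_cast h
  -- bound each B S
  have hBS : ∀ S ∈ 𝒮, ((B S).card : ℝ) ≤ d ^ (m * S.card) * (n:ℝ) ^ (n * k) := by
    intro S hS
    rw [hS𝒮, Finset.mem_filter] at hS
    exact per_S S hS.2.1 hS.2.2
  have hsum1 : ∑ S ∈ 𝒮, ((B S).card : ℝ)
      ≤ (∑ S ∈ 𝒮, d ^ (m * S.card)) * (n:ℝ) ^ (n * k) := by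
    rw [Finset.sum_mul]
    exact Finset.sum_le_sum hBS
  -- fiberwise bound of the subset sum
  have hfib : ∑ S ∈ 𝒮, d ^ (m * S.card)
      ≤ ((n:ℝ) + 1) * ((n:ℝ) * d ^ m) := by
    have hmap : ∀ S ∈ 𝒮, S.card ∈ Finset.range (n + 1) := by
      intro S _
      exact Finset.mem_range.2 (Nat.lt_succ_of_le
        (by simpa using Finset.card_le_card (Finset.subset_univ S)))
    rw [← Finset.sum_fiberwise_of_maps_to hmap (fun S => d ^ (m * S.card))]
    have hterm : ∀ α ∈ Finset.range (n + 1),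
        (∑ S ∈ 𝒮.filter (fun S => S.card = α), d ^ (m * S.card))
        ≤ (n:ℝ) * d ^ m := by
      intro α hα
      have heq : (∑ S ∈ 𝒮.filter (fun S => S.card = α), d ^ (m * S.card))
          = ((𝒮.filter (fun S => S.card = α)).card : ℝ) * d ^ (m * α) := by
        rw [Finset.sum_congr rfl (fun S hS => by
          rw [(Finset.mem_filter.1 hS).2]), Finset.sum_const, nsmul_eq_mul]
      rw [heq]
      rcases Nat.eq_zero_or_pos α with h0 | h1
      · have : (𝒮.filter (fun S => S.card = α)) = ∅ := by
          rw [Finset.eq_empty_iff_forall_notMem]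
          intro S hS
          rw [Finset.mem_filter, hS𝒮, Finset.mem_filter] at hS
          omega
        rw [this]
        simp only [Finset.card_empty, Nat.cast_zero, zero_mul]
        positivity
      · have hcard : ((𝒮.filter (fun S => S.card = α)).card : ℝ) ≤ (n:ℝ) ^ α := by
          have hsub2 : 𝒮.filter (fun S => S.card = α) ⊆
              Finset.powersetCard α (univ : Finset (Fin n)) := by
            intro S hS
            rw [Finset.mem_filter] at hS
            exact Finset.mem_powersetCard.2 ⟨Finset.subset_univ S, hS.2⟩
          have h5 := Finset.card_le_card hsub2
          rw [Finset.card_powersetCard, Finset.card_univ, Fintype.card_fin] at h5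
          calc ((𝒮.filter (fun S => S.card = α)).card : ℝ)
              ≤ (n.choose α : ℝ) := by exact_mod_cast h5
            _ ≤ ((n:ℕ)^α : ℝ) := by exact_mod_cast Nat.choose_le_pow n α
            _ = (n:ℝ)^α := by push_cast; ring
        calc ((𝒮.filter (fun S => S.card = α)).card : ℝ) * d ^ (m * α)
            ≤ (n:ℝ)^α * d ^ (m * α) := by
              apply mul_le_mul_of_nonneg_right hcard; positivity
          _ = ((n:ℝ) * d ^ m) ^ α := by rw [mul_pow, pow_mul]
          _ ≤ ((n:ℝ) * d ^ m) ^ 1 :=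
              pow_le_pow_of_le_one (by positivity) hnd1 h1
          _ = (n:ℝ) * d ^ m := pow_one _
    calc ∑ α ∈ Finset.range (n + 1), ∑ S ∈ 𝒮.filter (fun S => S.card = α),
          d ^ (m * S.card)
        ≤ ∑ _α ∈ Finset.range (n + 1), (n:ℝ) * d ^ m := Finset.sum_le_sum hterm
      _ = ((n:ℝ) + 1) * ((n:ℝ) * d ^ m) := by
          rw [Finset.sum_const, Finset.card_range, nsmul_eq_mul]
          push_cast; ring
  -- final arithmetic
  have hfin : ((n:ℝ) + 1) * ((n:ℝ) * d ^ m) ≤ 1 / n := by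
    have step : ((n:ℝ) + 1) * ((n:ℝ) * d ^ m)
        ≤ ((n:ℝ) + 1) * ((n:ℝ) * ((n:ℝ)^9)⁻¹) := by
      apply mul_le_mul_of_nonneg_left _ (by positivity)
      exact mul_le_mul_of_nonneg_left hdm hn0.le
    refine step.trans ?_
    rw [show ((n:ℝ) + 1) * ((n:ℝ) * ((n:ℝ)^9)⁻¹) = (((n:ℝ) + 1) * n) / (n:ℝ)^9 by ring,
      div_le_div_iff₀ (by positivity) hn0]
    have hkey : (0:ℝ) ≤ ((n:ℝ) - 2) * ((n:ℝ) + 1) :=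
      mul_nonneg (by linarith) (by linarith)
    have h4 : ((n:ℝ) + 1) * n * n ≤ (n:ℝ)^4 := by
      nlinarith [mul_nonneg (mul_nonneg hn0.le hn0.le) hkey, sq_nonneg ((n:ℝ))]
    have h49 : (n:ℝ)^4 ≤ (n:ℝ)^9 := pow_le_pow_right₀ h1n (by norm_num)
    nlinarith
  have hcard : ((Fintype.card (Fin n × Fin k → Fin n)) : ℝ) = (n:ℝ) ^ (n * k) := by
    rw [Fintype.card_fun]
    push_cast [Fintype.card_prod, Fintype.card_fin]
    ring
  calc ((Finset.univ.filter (fun f : Fin n × Fin k → Fin n =>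
        ¬ ∀ S : Finset (Fin n), 1 ≤ S.card → 2 * S.card ≤ n →
          k * S.card ≤ 4 * (Finset.univ.filter
            (fun p : Fin n × Fin k => (p.1 ∈ S) ≠ (f p ∈ S))).card)).card : ℝ)
      ≤ ∑ S ∈ 𝒮, ((B S).card : ℝ) := hcount
    _ ≤ (∑ S ∈ 𝒮, d ^ (m * S.card)) * (n:ℝ) ^ (n * k) := hsum1
    _ ≤ (((n:ℝ) + 1) * ((n:ℝ) * d ^ m)) * (n:ℝ) ^ (n * k) := by
        apply mul_le_mul_of_nonneg_right hfib; positivity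
    _ ≤ (1 / n) * (n:ℝ) ^ (n * k) := by
        apply mul_le_mul_of_nonneg_right hfin; positivity
    _ = (1 / n) * (Fintype.card (Fin n × Fin k → Fin n)) := by rw [hcard]
end

section
/- Let G be a graph on n vertices where in graph Ĝ (obtained by adding ⌈m/n⌉ self-loops at each vertex of G, where m = |E(G)|) every cut (S,S̄) with vol_Ĝ(S), vol_Ĝ(S̄) ≥ b·vol(Ĝ) has conductance at least ψ. Then every cut (S,S̄) of G with |S|, |S̄| ≥ 4b·n has sparsity Ψ_G(S) ≥ ψ/3. -/
open Finset
open scoped Classical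

/-- Let `Ĝ` be obtained from a connected graph `G` (with `n`
vertices and `m` edges) by adding `s = ⌈m/n⌉` self-loops at each vertex, so
`deg_Ĝ(v) = deg_G(v) + 2s`.  Self-loops never cross cuts, so
`E_Ĝ(S,S̄) = E_G(S,S̄)`.  If every cut `(S,S̄)` of `Ĝ` with
`vol_Ĝ(S), vol_Ĝ(S̄) ≥ b·vol(Ĝ)` has conductance at least `ψ`, then every cut
`(S,S̄)` of `G` with `|S|, |S̄| ≥ 4b·n` has sparsity `Ψ_G(S) ≥ ψ/3`. -/
theorem stmt17 {V : Type*} [Fintype V] (G : SimpleGraph V) (hconn : G.Connected)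
    (b ψ : ℝ) (hb0 : 0 < b) (hψ : 0 < ψ)
    (s : ℕ) (hs : s = ⌈(G.edgeFinset.card : ℝ) / (Fintype.card V)⌉₊)
    (hcond : ∀ S : Finset V,
      b * (∑ v : V, ((G.degree v : ℝ) + 2 * s)) ≤ ∑ v ∈ S, ((G.degree v : ℝ) + 2 * s) →
      b * (∑ v : V, ((G.degree v : ℝ) + 2 * s)) ≤ ∑ v ∈ Finset.univ \ S, ((G.degree v : ℝ) + 2 * s) →
      ψ * min (∑ v ∈ S, ((G.degree v : ℝ) + 2 * s))
              (∑ v ∈ Finset.univ \ S, ((G.degree v : ℝ) + 2 * s))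
        ≤ (cutCard G S : ℝ)) :
    ∀ S : Finset V, 4 * b * (Fintype.card V) ≤ (S.card : ℝ) →
      4 * b * (Fintype.card V) ≤ ((Finset.univ \ S).card : ℝ) →
      ψ / 3 * min (S.card : ℝ) ((Finset.univ \ S).card : ℝ) ≤ (cutCard G S : ℝ) := by
  intro S hS hSc
  have hV : Nonempty V := hconn.nonempty
  have hn : 0 < (Fintype.card V : ℝ) := by exact_mod_cast Fintype.card_pos
  have hS1 : (1 : ℝ) ≤ S.card := by
    have h0 : 0 < (S.card : ℝ) := lt_of_lt_of_le (by positivity) hS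
    exact_mod_cast Nat.one_le_iff_ne_zero.mpr (by exact_mod_cast h0.ne')
  have hSc1 : (1 : ℝ) ≤ ((univ \ S).card : ℝ) := by
    have h0 : 0 < ((univ \ S).card : ℝ) := lt_of_lt_of_le (by positivity) hSc
    exact_mod_cast Nat.one_le_iff_ne_zero.mpr (by exact_mod_cast h0.ne')
  -- there are two distinct vertices, hence an edge, hence m ≥ 1 and s ≥ 1
  obtain ⟨u, hu⟩ := Finset.card_pos.mp (by exact_mod_cast hS1 : 0 < S.card)
  obtain ⟨v, hv⟩ := Finset.card_pos.mp (by exact_mod_cast hSc1 : 0 < (univ \ S).card)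
  have huv : u ≠ v := by
    intro h; subst h; exact (Finset.mem_sdiff.mp hv).2 hu
  have hm1 : 0 < G.edgeFinset.card := by
    obtain ⟨w⟩ := hconn u v
    have hnil : ¬ w.Nil := SimpleGraph.Walk.not_nil_of_ne huv
    have hadj : G.Adj u (w.getVert 1) := SimpleGraph.Walk.adj_snd hnil
    refine Finset.card_pos.mpr ⟨s(u, w.getVert 1), ?_⟩
    rwa [SimpleGraph.mem_edgeFinset, SimpleGraph.mem_edgeSet]
  have hs1 : 1 ≤ s := by
    rw [hs]
    exact Nat.one_le_iff_ne_zero.mpr (Nat.ceil_pos.mpr (by positivity)).ne'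
  have hmn : (G.edgeFinset.card : ℝ) ≤ s * Fintype.card V := by
    have := Nat.le_ceil ((G.edgeFinset.card : ℝ) / (Fintype.card V))
    rw [← hs] at this
    calc (G.edgeFinset.card : ℝ) = (G.edgeFinset.card : ℝ) / (Fintype.card V) * Fintype.card V := by
          field_simp
      _ ≤ s * Fintype.card V := by
          exact mul_le_mul_of_nonneg_right this hn.le
  -- volumes
  have hdeg : ∀ v : V, (0:ℝ) ≤ (G.degree v : ℝ) := fun v => by positivity
  have hvolS : ∀ T : Finset V, (2 * s : ℝ) * T.card ≤ ∑ v ∈ T, ((G.degree v : ℝ) + 2 * s) := by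
    intro T
    calc (2 * s : ℝ) * T.card = ∑ _v ∈ T, (2 * s : ℝ) := by
          rw [Finset.sum_const, nsmul_eq_mul]; ring
      _ ≤ _ := Finset.sum_le_sum (fun v _ => by have := hdeg v; linarith)
  have hvoltot : ∑ v : V, ((G.degree v : ℝ) + 2 * s) ≤ 4 * s * Fintype.card V := by
    have hsum : ∑ v : V, (G.degree v : ℝ) = 2 * G.edgeFinset.card := by
      exact_mod_cast congrArg (Nat.cast : ℕ → ℝ) (SimpleGraph.sum_degrees_eq_twice_card_edges G)
    rw [Finset.sum_add_distrib, hsum, Finset.sum_const, nsmul_eq_mul]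
    simp only [Finset.card_univ]
    nlinarith
  have hsR : (1:ℝ) ≤ (s:ℝ) := by exact_mod_cast hs1
  -- apply hcond
  have key1 : b * (∑ v : V, ((G.degree v : ℝ) + 2 * s)) ≤ ∑ v ∈ S, ((G.degree v : ℝ) + 2 * s) := by
    have := hvolS S
    nlinarith [hb0.le, hS, hvoltot]
  have key2 : b * (∑ v : V, ((G.degree v : ℝ) + 2 * s)) ≤
      ∑ v ∈ univ \ S, ((G.degree v : ℝ) + 2 * s) := by
    have := hvolS (univ \ S)
    nlinarith [hb0.le, hSc, hvoltot]
  have hcut := hcond S key1 key2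
  -- cards ≤ volumes
  have hcS : (S.card : ℝ) ≤ ∑ v ∈ S, ((G.degree v : ℝ) + 2 * s) := by
    have := hvolS S
    nlinarith [Nat.cast_nonneg (α := ℝ) S.card]
  have hcSc : ((univ \ S).card : ℝ) ≤ ∑ v ∈ univ \ S, ((G.degree v : ℝ) + 2 * s) := by
    have := hvolS (univ \ S)
    nlinarith [Nat.cast_nonneg (α := ℝ) (univ \ S).card]
  have hmin : min (S.card : ℝ) ((univ \ S).card : ℝ) ≤
      min (∑ v ∈ S, ((G.degree v : ℝ) + 2 * s)) (∑ v ∈ univ \ S, ((G.degree v : ℝ) + 2 * s)) :=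
    min_le_min hcS hcSc
  have hminpos : (0:ℝ) ≤ min (S.card : ℝ) ((univ \ S).card : ℝ) := le_min (by positivity) (by positivity)
  calc ψ / 3 * min (S.card : ℝ) ((univ \ S).card : ℝ)
      ≤ ψ * min (S.card : ℝ) ((univ \ S).card : ℝ) := by nlinarith
    _ ≤ ψ * min (∑ v ∈ S, ((G.degree v : ℝ) + 2 * s)) (∑ v ∈ univ \ S, ((G.degree v : ℝ) + 2 * s)) :=
        mul_le_mul_of_nonneg_left hmin hψ.le
    _ ≤ (cutCard G S : ℝ) := hcut
end
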